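/- arXiv:2103.07435 — 9 statements merged into one kernel-verified Lean document; each statement's English description precedes it below -/
import Mathlib

section
/- Let T be a unitary operator on L²(μ) induced by a mixing measure-preserving automorphism of a probability space (X, μ), i.e. Tⁿ → Θ in the weak operator topology as n → ∞, where Θ is the projection onto constants. Let (a^j) be a dissipative sequence of probability weights on ℤ, meaning a^j_z ≥ 0, ∑_z a^j_z = 1, and max_z a^j_z → 0 as j → ∞. Then for every f ∈ L²(μ), ‖∑_z a^j_z T^z f − Θf‖ → 0 in L²-norm. -/
/-!
Write `P_j = ∑_z a^j_z T^z`. Weak convergence `Tⁿ → Θ` forces `T (Θ f) = Θ f`, so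
`P_j f - Θ f = P_j g` for `g = f - Θ f`, and `Tⁿ g → 0` weakly. The correlations
`c k = ⟪T^k g, g⟫` are even in `k`, hence tend to `0` as `|k| → ∞`: outside a finite set `S`
they are at most `ε`. Expanding `‖P_j g‖² = ∑_{z,w} a^j_z a^j_w c(w - z)` and splitting each
inner sum along the translate `S + z` bounds it by `#S ‖g‖² max_w a^j_w + ε`.
-/

open MeasureTheory Filter Finset Topology
open scoped RealInnerProductSpace

section Weights

variable {ι : Type*} {a d : ι → ℝ}

theorem Summable.mul_of_nonneg_of_le {B : ℝ} (has : Summable a) (ha : ∀ i, 0 ≤ a i)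
    (hd : ∀ i, 0 ≤ d i) (hdB : ∀ i, d i ≤ B) : Summable fun i => a i * d i :=
  .of_nonneg_of_le (fun i => mul_nonneg (ha i) (hd i))
    (fun i => mul_le_mul_of_nonneg_left (hdB i) (ha i)) (has.mul_right B)

theorem tsum_mul_le_of_le_off_finset (S : Finset ι) {m B ε : ℝ} (ha : ∀ i, 0 ≤ a i)
    (has : Summable a) (ha1 : ∑' i, a i = 1) (ham : ∀ i, a i ≤ m) (hε : 0 ≤ ε)
    (hd : ∀ i, 0 ≤ d i) (hdB : ∀ i, d i ≤ B) (hdε : ∀ i ∉ S, d i ≤ ε) :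
    ∑' i, a i * d i ≤ #S * B * m + ε := by
  have had := has.mul_of_nonneg_of_le ha hd hdB
  rw [← had.sum_add_tsum_subtype_compl S]
  gcongr
  · calc ∑ i ∈ S, a i * d i ≤ ∑ _i ∈ S, m * B :=
          sum_le_sum fun i _ => mul_le_mul (ham i) (hdB i) (hd i) ((ha i).trans (ham i))
      _ = #S * B * m := by rw [sum_const, nsmul_eq_mul]; ring
  · calc ∑' i : {i // i ∉ S}, a i * d i ≤ ∑' i : {i // i ∉ S}, a i * ε :=
          (had.subtype _).tsum_le_tsum (fun i => mul_le_mul_of_nonneg_left (hdε i i.2) (ha i))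
            ((has.mul_right ε).subtype _)
      _ ≤ ∑' i, a i * ε := (has.mul_right ε).tsum_subtype_le _ _ (fun i => mul_nonneg (ha i) hε)
      _ = ε := by rw [tsum_mul_right, ha1, one_mul]

end Weights

theorem tendsto_zero_of_forall_le_mul_add {α : Type*} {l : Filter α} {u m : α → ℝ}
    (hm : Tendsto m l (𝓝 0)) (hu0 : ∀ x, 0 ≤ u x) (hu : ∀ ε > 0, ∃ C, ∀ x, u x ≤ C * m x + ε) :
    Tendsto u l (𝓝 0) := by
  rw [tendsto_order]
  refine ⟨fun b hb => .of_forall fun x => hb.trans_le (hu0 x), fun ε hε => ?_⟩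
  obtain ⟨C, hC⟩ := hu (ε / 2) (half_pos hε)
  have hlim : Tendsto (fun x => C * m x + ε / 2) l (𝓝 (ε / 2)) := by
    simpa using (hm.const_mul C).add_const (ε / 2)
  filter_upwards [hlim.eventually (gt_mem_nhds (half_lt_self hε))] with x hx
  exact (hC x).trans_lt hx

section Hilbert

variable {E : Type*} [NormedAddCommGroup E] [InnerProductSpace ℝ E]

theorem abs_inner_tsum_smul_le {ι : Type*} {a b : ι → ℝ} (ha : ∀ i, 0 ≤ a i) {v : ι → E} {h : E}
    (hab : Summable fun i => a i * b i) (hvb : ∀ i, |⟪v i, h⟫| ≤ b i) :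
    |⟪∑' i, a i • v i, h⟫| ≤ ∑' i, a i * b i := by
  by_cases hv : Summable fun i => a i • v i
  · have hsum : ⟪∑' i, a i • v i, h⟫ = ∑' i, a i * ⟪v i, h⟫ := by
      rw [real_inner_comm, ← innerSL_apply_apply (𝕜 := ℝ) h, (innerSL ℝ h).map_tsum hv]
      simp only [innerSL_apply_apply, real_inner_smul_right, real_inner_comm]
    rw [hsum, ← Real.norm_eq_abs]
    refine tsum_of_norm_bounded hab.hasSum fun i => ?_
    rw [Real.norm_eq_abs, abs_mul, abs_of_nonneg (ha i)]
    exact mul_le_mul_of_nonneg_left (hvb i) (ha i)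
  · rw [tsum_eq_zero_of_not_summable hv, inner_zero_left, abs_zero]
    exact tsum_nonneg fun i => mul_nonneg (ha i) ((abs_nonneg _).trans (hvb i))

variable (T : E ≃ₗᵢ[ℝ] E)

theorem zpow_apply_zpow_apply (k l : ℤ) (x : E) : (T ^ k) ((T ^ l) x) = (T ^ (k + l)) x := by
  rw [zpow_add]; rfl

theorem inner_zpow_apply_zpow_apply (k l : ℤ) (x : E) :
    ⟪(T ^ k) x, (T ^ l) x⟫ = ⟪(T ^ (k - l)) x, x⟫ := by
  rw [← LinearIsometryEquiv.inner_map_map (T ^ l) ((T ^ (k - l)) x), zpow_apply_zpow_apply,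
    add_sub_cancel]

theorem inner_zpow_neg_apply (k : ℤ) (x : E) : ⟪(T ^ (-k)) x, x⟫ = ⟪(T ^ k) x, x⟫ := by
  rw [← zero_sub, ← inner_zpow_apply_zpow_apply, zpow_zero, LinearIsometryEquiv.coe_one, id,
    real_inner_comm]

theorem tendsto_inner_zpow_apply_self_cofinite {g : E}
    (hg : ∀ h, Tendsto (fun n : ℕ => ⟪(T ^ (n : ℤ)) g, h⟫) atTop (𝓝 0)) :
    Tendsto (fun k : ℤ => ⟪(T ^ k) g, g⟫) cofinite (𝓝 0) := by
  have hTop : Tendsto (fun k : ℤ => ⟪(T ^ k) g, g⟫) atTop (𝓝 0) := by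
    rw [← Nat.map_cast_int_atTop, tendsto_map'_iff]
    exact hg g
  rw [Int.cofinite_eq, tendsto_sup]
  refine ⟨?_, hTop⟩
  simpa only [Function.comp_def, inner_zpow_neg_apply] using hTop.comp tendsto_neg_atBot_atTop

theorem norm_tsum_smul_zpow_apply_sq_le {a : ℤ → ℝ} (ha : ∀ z, 0 ≤ a z) (has : Summable a)
    (ha1 : ∑' z, a z = 1) {m ε : ℝ} (ham : ∀ z, a z ≤ m) (hε : 0 ≤ ε) (g : E) (S : Finset ℤ)
    (hS : ∀ k ∉ S, |⟪(T ^ k) g, g⟫| ≤ ε) :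
    ‖∑' z, a z • (T ^ z) g‖ ^ 2 ≤ #S * ‖g‖ ^ 2 * m + ε := by
  set P := ∑' z, a z • (T ^ z) g
  have hnorm : ∀ k l : ℤ, |⟪(T ^ k) g, (T ^ l) g⟫| ≤ ‖g‖ ^ 2 := fun k l => by
    simpa only [LinearIsometryEquiv.norm_map, sq] using
      abs_real_inner_le_norm ((T ^ k) g) ((T ^ l) g)
  have hcorr : ∀ z : ℤ, |⟪(T ^ z) g, P⟫| ≤ #S * ‖g‖ ^ 2 * m + ε := by
    intro z
    rw [real_inner_comm]
    refine (abs_inner_tsum_smul_le (v := fun w => (T ^ w) g)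
      (b := fun w => |⟪(T ^ w) g, (T ^ z) g⟫|) ha
      (has.mul_of_nonneg_of_le ha (fun _ => abs_nonneg _) (hnorm · z)) fun _ => le_rfl).trans ?_
    refine (tsum_mul_le_of_le_off_finset (S.map (Equiv.addRight z).toEmbedding) ha has ha1 ham hε
      (fun _ => abs_nonneg _) (hnorm · z) fun w hw => ?_).trans_eq (by rw [card_map])
    rw [inner_zpow_apply_zpow_apply]
    exact hS _ (by simpa [mem_map_equiv, sub_eq_add_neg] using hw)
  calc ‖P‖ ^ 2 ≤ |⟪P, P⟫| := by rw [real_inner_self_eq_norm_sq]; exact le_abs_self _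
    _ ≤ ∑' z, a z * (#S * ‖g‖ ^ 2 * m + ε) :=
      abs_inner_tsum_smul_le (b := fun _ => #S * ‖g‖ ^ 2 * m + ε) ha (has.mul_right _) hcorr
    _ = #S * ‖g‖ ^ 2 * m + ε := by rw [tsum_mul_right, ha1, one_mul]

theorem tendsto_norm_tsum_smul_zpow_apply {g : E}
    (hg : ∀ h, Tendsto (fun n : ℕ => ⟪(T ^ (n : ℤ)) g, h⟫) atTop (𝓝 0)) (a : ℕ → ℤ → ℝ)
    (ha_nonneg : ∀ j z, 0 ≤ a j z) (ha_summable : ∀ j, Summable (a j))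
    (ha_sum : ∀ j, ∑' z, a j z = 1) (ha_max : Tendsto (fun j => ⨆ z, a j z) atTop (𝓝 0)) :
    Tendsto (fun j => ‖∑' z, a j z • (T ^ z) g‖) atTop (𝓝 0) := by
  have ha_le : ∀ j z, a j z ≤ ⨆ w, a j w := fun j z =>
    le_ciSup ⟨1, by rintro _ ⟨w, rfl⟩; exact ha_sum j ▸
      (ha_summable j).le_tsum w fun i _ => ha_nonneg j i⟩ z
  suffices Tendsto (fun j => ‖∑' z, a j z • (T ^ z) g‖ ^ 2) atTop (𝓝 0) by
    simpa only [Real.sqrt_sq (norm_nonneg _), Real.sqrt_zero] using this.sqrt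
  refine tendsto_zero_of_forall_le_mul_add ha_max (fun j => sq_nonneg _) fun ε hε => ?_
  have hfin : {k : ℤ | ¬|⟪(T ^ k) g, g⟫| ≤ ε}.Finite :=
    eventually_cofinite.1 <| (tendsto_inner_zpow_apply_self_cofinite T hg).abs.eventually
      (ge_mem_nhds (by rwa [abs_zero]))
  refine ⟨#hfin.toFinset * ‖g‖ ^ 2, fun j => ?_⟩
  refine norm_tsum_smul_zpow_apply_sq_le T (ha_nonneg j) (ha_summable j) (ha_sum j) (ha_le j)
    hε.le g hfin.toFinset fun k hk => ?_
  simpa using hk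

theorem zpow_apply_eq_of_tendsto_inner {f p : E}
    (hp : ∀ h, Tendsto (fun n : ℕ => ⟪(T ^ (n : ℤ)) f, h⟫) atTop (𝓝 ⟪p, h⟫)) (z : ℤ) :
    (T ^ z) p = p := by
  have hT : T p = p := by
    -- `⟪T p, h⟫ = ⟪p, T⁻¹ h⟫ = lim ⟪Tⁿ⁺¹ f, h⟫ = ⟪p, h⟫`
    refine ext_inner_right ℝ fun h => ?_
    rw [LinearIsometryEquiv.inner_map_eq_flip]
    refine tendsto_nhds_unique (hp (T.symm h))
      ((tendsto_add_atTop_iff_nat 1).2 (hp h) |>.congr fun n => ?_)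
    rw [← LinearIsometryEquiv.inner_map_eq_flip, Nat.cast_succ, add_comm, zpow_one_add]
    rfl
  induction z with
  | zero => rfl
  | succ k ih => rwa [← zpow_apply_zpow_apply, zpow_one, hT]
  | pred k ih => rwa [sub_eq_add_neg, ← zpow_apply_zpow_apply, zpow_neg_one,
      LinearIsometryEquiv.coe_inv, T.symm_apply_eq.2 hT.symm]

theorem tsum_smul_zpow_apply_sub_of_zpow_apply_eq [CompleteSpace E] {a : ℤ → ℝ}
    (has : Summable a) (ha1 : ∑' z, a z = 1) {p : E} (hp : ∀ z : ℤ, (T ^ z) p = p) (f : E) :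
    ∑' z, a z • (T ^ z) f - p = ∑' z, a z • (T ^ z) (f - p) := by
  have hsum : ∀ x : E, Summable fun z => a z • (T ^ z) x := fun x =>
    .of_norm_bounded (has.norm.mul_right ‖x‖) fun z => by
      rw [norm_smul, LinearIsometryEquiv.norm_map]
  simp only [map_sub, smul_sub, hp]
  rw [(hsum f).tsum_sub (has.smul_const p), has.tsum_smul_const, ha1, one_smul]

end Hilbert

theorem stmt2_general {X : Type*} [MeasurableSpace X] (μ : Measure X)
    (T : Lp ℝ 2 μ ≃ₗᵢ[ℝ] Lp ℝ 2 μ) (Θ : Lp ℝ 2 μ →L[ℝ] Lp ℝ 2 μ)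
    (hmix : ∀ f g : Lp ℝ 2 μ,
      Tendsto (fun n : ℕ => (inner ℝ ((T ^ (n : ℤ)) f) g : ℝ)) atTop (nhds (inner ℝ (Θ f) g)))
    (a : ℕ → ℤ → ℝ)
    (ha_nonneg : ∀ j z, 0 ≤ a j z)
    (ha_summable : ∀ j, Summable (a j))
    (ha_sum : ∀ j, ∑' z, a j z = 1)
    (ha_max : Tendsto (fun j => ⨆ z, a j z) atTop (nhds 0))
    (f : Lp ℝ 2 μ) :
    Tendsto (fun j => ‖(∑' z : ℤ, a j z • (T ^ z) f) - Θ f‖) atTop (nhds 0) := by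
  have hfix := zpow_apply_eq_of_tendsto_inner T (hmix f)
  have hmix₀ : ∀ h, Tendsto (fun n : ℕ => ⟪(T ^ (n : ℤ)) (f - Θ f), h⟫) atTop (𝓝 0) := fun h => by
    simpa only [map_sub, hfix, inner_sub_left, sub_self] using (hmix f h).sub_const ⟪Θ f, h⟫
  simpa only [tsum_smul_zpow_apply_sub_of_zpow_apply_eq T (ha_summable _) (ha_sum _) hfix] using
    tendsto_norm_tsum_smul_zpow_apply T hmix₀ a ha_nonneg ha_summable ha_sum ha_max

/-- Blum–Hanson type theorem: if `T` is the unitary Koopman operator of a mixing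
automorphism (`Tⁿ → Θ` weakly, `Θ` the projection onto constants) and `(a^j)` is a
dissipative sequence of probability weights on `ℤ` (nonnegative, summing to `1`,
with `sup_z a^j_z → 0`), then `∑_z a^j_z T^z f → Θ f` in `L²`-norm. -/
theorem stmt2 {X : Type*} [MeasurableSpace X] (μ : Measure X) [IsProbabilityMeasure μ]
    (T : Lp ℝ 2 μ ≃ₗᵢ[ℝ] Lp ℝ 2 μ) (Θ : Lp ℝ 2 μ →L[ℝ] Lp ℝ 2 μ)
    (hΘ : ∀ f : Lp ℝ 2 μ, Θ f = (∫ x, f x ∂μ) • (Lp.const 2 μ (1 : ℝ)))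
    (hmix : ∀ f g : Lp ℝ 2 μ,
      Tendsto (fun n : ℕ => (inner ℝ ((T ^ (n : ℤ)) f) g : ℝ)) atTop (nhds (inner ℝ (Θ f) g)))
    (a : ℕ → ℤ → ℝ)
    (ha_nonneg : ∀ j z, 0 ≤ a j z)
    (ha_summable : ∀ j, Summable (a j))
    (ha_sum : ∀ j, ∑' z, a j z = 1)
    (ha_max : Tendsto (fun j => ⨆ z, a j z) atTop (nhds 0))
    (f : Lp ℝ 2 μ) :
    Tendsto (fun j => ‖(∑' z : ℤ, a j z • (T ^ z) f) - Θ f‖) atTop (nhds 0) :=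
  stmt2_general μ T Θ hmix a ha_nonneg ha_summable ha_sum ha_max f
end

section
/- Let T be an ergodic (Koopman operator of a) measure-preserving automorphism of a probability space, and let (P_j) be a sequence of Markov operators (positive contractions with P_j 1 = P_j* 1 = 1) such that T P_j − P_j → 0 in the weak operator topology. Then P_j → Θ in the weak operator topology, where Θ is the projection onto constants. -/
/-!
Since `P_j* 1 = 1`, the coefficient `⟪P_j f, 1⟫ = ∫ f` does not depend on `j`,
so it suffices to show `⟪P_j f, g⟫ → 0` for `g ⊥ 1`. The vectors orthogonal to the range of
`T - 1` are fixed by the isometry `T`, hence constant by ergodicity; so every `g ⊥ 1` lies in the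
closure of that range. On `g = T w - w` we have `⟪P_j f, g⟫ = -⟪T P_j f - P_j f, T w⟫ → 0`, and
the uniform bound `‖P_j f‖ ≤ ‖f‖` carries this to the closure.
-/

open MeasureTheory Filter
open scoped Topology NNReal

section Hilbert

variable {𝕜 E ι : Type*} [RCLike 𝕜] [NormedAddCommGroup E] [InnerProductSpace 𝕜 E]
  {l : Filter ι}

local notation "⟪" x ", " y "⟫" => inner 𝕜 x y

theorem tendsto_inner_zero_of_mem_closure {x : ι → E} {C : ℝ≥0} (hx : ∀ j, ‖x j‖ ≤ C)
    {s : Set E} (hs : ∀ k ∈ s, Tendsto (fun j => ⟪x j, k⟫) l (𝓝 0)) {g : E}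
    (hg : g ∈ closure s) : Tendsto (fun j => ⟪x j, g⟫) l (𝓝 0) := by
  have hlip : ∀ j, LipschitzWith C (fun k => ⟪x j, k⟫) := fun j =>
    LipschitzWith.of_dist_le_mul fun k k' => by
      rw [dist_eq_norm, dist_eq_norm, ← inner_sub_right]
      exact (norm_inner_le_norm _ _).trans
        (mul_le_mul_of_nonneg_right (hx j) (norm_nonneg _))
  have hclosed : IsClosed {k | Tendsto (fun j => ⟪x j, k⟫) l (𝓝 0)} :=
    (LipschitzWith.uniformEquicontinuous _ C hlip).equicontinuous.isClosed_setOfPred_tendsto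
      continuous_const
  exact closure_minimal hs hclosed hg

theorem LinearIsometry.tendsto_inner_zero_of_forall_fixed_inner_eq_zero [CompleteSpace E]
    (T : E →ₗᵢ[𝕜] E) {x : ι → E} {C : ℝ≥0} (hx : ∀ j, ‖x j‖ ≤ C)
    (hTx : ∀ h, Tendsto (fun j => ⟪T (x j) - x j, h⟫) l (𝓝 0)) {g : E}
    (hg : ∀ v, T v = v → ⟪v, g⟫ = 0) : Tendsto (fun j => ⟪x j, g⟫) l (𝓝 0) := by
  set K := LinearMap.range (T.toLinearMap - LinearMap.id)
  have hgK : g ∈ K.topologicalClosure := by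
    rw [← Submodule.orthogonal_orthogonal_eq_closure, Submodule.mem_orthogonal]
    intro v hv
    -- `v ⊥ T v - v` gives `⟪T v, v⟫ = ‖v‖²`, which forces `T v = v` since `‖T v‖ ≤ ‖v‖`.
    refine hg v (eq_of_norm_le_re_inner_eq_norm_sq (𝕜 := 𝕜) (T.norm_map v).le ?_)
    have hTv : ⟪T v - v, v⟫ = 0 :=
      Submodule.inner_right_of_mem_orthogonal (K := K) (LinearMap.mem_range_self _ v) hv
    rw [inner_sub_left, sub_eq_zero] at hTv
    rw [hTv, inner_self_eq_norm_sq]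
  refine tendsto_inner_zero_of_mem_closure hx ?_ hgK
  rintro _ ⟨w, rfl⟩
  have hcancel : ∀ j, ⟪x j, T w - w⟫ = -⟪T (x j) - x j, T w⟫ := fun j => by
    simp only [inner_sub_left, inner_sub_right, T.inner_map_map]; ring
  simpa [hcancel] using (hTx (T w)).neg

theorem tendsto_inner_of_inner_unit_eq {e : E} (he : ‖e‖ = 1) {x : ι → E} {a : 𝕜}
    (hxe : ∀ j, ⟪x j, e⟫ = a) (hx : ∀ g, ⟪e, g⟫ = 0 → Tendsto (fun j => ⟪x j, g⟫) l (𝓝 0))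
    (g : E) : Tendsto (fun j => ⟪x j, g⟫) l (𝓝 (a * ⟪e, g⟫)) := by
  have hee : ⟪e, e⟫ = 1 := by rw [inner_self_eq_norm_sq_to_K, he]; simp
  have hperp : ⟪e, g - ⟪e, g⟫ • e⟫ = 0 := by
    rw [inner_sub_right, inner_smul_right, hee, mul_one, sub_self]
  have hsplit : ∀ j, ⟪x j, g⟫ = a * ⟪e, g⟫ + ⟪x j, g - ⟪e, g⟫ • e⟫ := fun j => by
    rw [inner_sub_right, inner_smul_right, hxe]; ring
  simpa [hsplit] using (hx _ hperp).const_add (a * ⟪e, g⟫)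

end Hilbert

namespace MeasureTheory.L2

variable {X 𝕜 : Type*} [RCLike 𝕜] [MeasurableSpace X] {μ : Measure X} [IsFiniteMeasure μ]

theorem inner_const_one (f : Lp 𝕜 2 μ) :
    inner 𝕜 (Lp.const 2 μ (1 : 𝕜)) f = ∫ x, f x ∂μ := by
  rw [← indicatorConstLp_univ, inner_indicatorConstLp_one, Measure.restrict_univ]

end MeasureTheory.L2

theorem stmt4_general {X : Type*} [MeasurableSpace X] (μ : Measure X) [IsProbabilityMeasure μ]
    (T : Lp ℝ 2 μ ≃ₗᵢ[ℝ] Lp ℝ 2 μ)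
    (herg : ∀ f : Lp ℝ 2 μ, T f = f → ∃ c : ℝ, f = c • (Lp.const 2 μ (1 : ℝ)))
    (P : ℕ → (Lp ℝ 2 μ →L[ℝ] Lp ℝ 2 μ))
    (hcontr : ∀ j, ‖P j‖ ≤ 1)
    (hP1adj : ∀ j, ContinuousLinearMap.adjoint (P j) (Lp.const 2 μ (1 : ℝ))
        = Lp.const 2 μ (1 : ℝ))
    (hweak : ∀ f g : Lp ℝ 2 μ,
      Tendsto (fun j => (inner ℝ (T (P j f) - P j f) g : ℝ)) atTop (nhds 0)) :
    ∀ f g : Lp ℝ 2 μ,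
      Tendsto (fun j => (inner ℝ (P j f) g : ℝ)) atTop
        (nhds (inner ℝ ((∫ x, f x ∂μ) • (Lp.const 2 μ (1 : ℝ))) g)) := by
  intro f g
  set e := Lp.const 2 μ (1 : ℝ)
  have he : ‖e‖ = 1 := by simp [e, Lp.norm_const]
  have hPe : ∀ j, inner ℝ (P j f) e = ∫ x, f x ∂μ := fun j => by
    rw [← ContinuousLinearMap.adjoint_inner_right, hP1adj, real_inner_comm, L2.inner_const_one]
  have hbound : ∀ j, ‖P j f‖ ≤ ‖f‖₊ := fun j => by
    simpa using (P j).le_of_opNorm_le (hcontr j) f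
  have hperp : ∀ g, inner ℝ e g = 0 → Tendsto (fun j => inner ℝ (P j f) g) atTop (𝓝 0) := by
    intro g hg
    refine T.toLinearIsometry.tendsto_inner_zero_of_forall_fixed_inner_eq_zero hbound
      (hweak f) fun v hv => ?_
    obtain ⟨c, rfl⟩ := herg v hv
    rw [real_inner_smul_left, hg, mul_zero]
  rw [real_inner_smul_left]
  exact tendsto_inner_of_inner_unit_eq he hPe hperp g

/-- If `T` is the ergodic unitary Koopman operator of a measure-preserving
automorphism of a probability space and `(P_j)` is a sequence of Markov operators
(positive contractions with `P_j 1 = P_j* 1 = 1`) such that `T P_j − P_j → 0` in the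
weak operator topology, then `P_j → Θ` weakly, where `Θ` is the projection onto
constants. -/
theorem stmt4 {X : Type*} [MeasurableSpace X] (μ : Measure X) [IsProbabilityMeasure μ]
    (T : Lp ℝ 2 μ ≃ₗᵢ[ℝ] Lp ℝ 2 μ)
    (hT1 : T (Lp.const 2 μ (1 : ℝ)) = Lp.const 2 μ (1 : ℝ))
    (herg : ∀ f : Lp ℝ 2 μ, T f = f → ∃ c : ℝ, f = c • (Lp.const 2 μ (1 : ℝ)))
    (P : ℕ → (Lp ℝ 2 μ →L[ℝ] Lp ℝ 2 μ))
    (hpos : ∀ j, ∀ f : Lp ℝ 2 μ, 0 ≤ f → 0 ≤ P j f)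
    (hcontr : ∀ j, ‖P j‖ ≤ 1)
    (hP1 : ∀ j, P j (Lp.const 2 μ (1 : ℝ)) = Lp.const 2 μ (1 : ℝ))
    (hP1adj : ∀ j, ContinuousLinearMap.adjoint (P j) (Lp.const 2 μ (1 : ℝ))
        = Lp.const 2 μ (1 : ℝ))
    (hweak : ∀ f g : Lp ℝ 2 μ,
      Tendsto (fun j => (inner ℝ (T (P j f) - P j f) g : ℝ)) atTop (nhds 0)) :
    ∀ f g : Lp ℝ 2 μ,
      Tendsto (fun j => (inner ℝ (P j f) g : ℝ)) atTop
        (nhds (inner ℝ ((∫ x, f x ∂μ) • (Lp.const 2 μ (1 : ℝ))) g)) :=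
  stmt4_general μ T herg P hcontr hP1adj hweak
end

section
/- Let A₁, ..., A_r and B₁, ..., B_r be measurable subsets of a probability space (X, μ) with A_i ∩ B_i = ∅ for each i = 1, ..., r. Then (μ ⊗ μ)(⋃_{i=1}^{r} A_i × B_i) ≤ 1 − 2^{−4r}. -/
open MeasureTheory

/-- If `A₁, …, A_r` and `B₁, …, B_r` are measurable subsets of a probability space
`(X, μ)` with `A_i ∩ B_i = ∅` for each `i`, then
`(μ ⊗ μ)(⋃ i, A_i × B_i) ≤ 1 − 2^{−4r}`. -/
theorem stmt7 {X : Type*} [MeasurableSpace X] (μ : Measure X) [IsProbabilityMeasure μ]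
    (r : ℕ) (A B : Fin r → Set X)
    (hA : ∀ i, MeasurableSet (A i)) (hB : ∀ i, MeasurableSet (B i))
    (hdisj : ∀ i, A i ∩ B i = ∅) :
    (μ.prod μ) (⋃ i, (A i) ×ˢ (B i)) ≤ 1 - (1 / 2 : ENNReal) ^ (4 * r) := by
  classical
  set C : (Fin r → Bool × Bool) → Set X := fun f =>
    ⋂ i, ((if (f i).1 then A i else (A i)ᶜ) ∩ (if (f i).2 then B i else (B i)ᶜ)) with hC
  have hmem : ∀ f x, x ∈ C f ↔ ∀ i, ((f i).1 = true ↔ x ∈ A i) ∧ ((f i).2 = true ↔ x ∈ B i) := by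
    intro f x
    simp only [hC, Set.mem_iInter, Set.mem_inter_iff]
    refine forall_congr' fun i => ?_
    rcases Bool.eq_false_or_eq_true (f i).1 with h1 | h1 <;>
    rcases Bool.eq_false_or_eq_true (f i).2 with h2 | h2 <;>
      simp [h1, h2]
  have hmeas : ∀ f, MeasurableSet (C f) := by
    intro f
    refine MeasurableSet.iInter fun i => MeasurableSet.inter ?_ ?_
    · split
      · exact hA i
      · exact (hA i).compl
    · split
      · exact hB i
      · exact (hB i).compl
  have hcover : (⋃ f, C f) = Set.univ := by
    ext x
    simp only [Set.mem_iUnion, Set.mem_univ, iff_true]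
    refine ⟨fun i => (decide (x ∈ A i), decide (x ∈ B i)), ?_⟩
    rw [hmem]
    intro i
    simp [decide_eq_true_eq]
  have hsum : (1 : ENNReal) ≤ ∑ f : Fin r → Bool × Bool, μ (C f) := by
    calc (1 : ENNReal) = μ Set.univ := measure_univ.symm
    _ = μ (⋃ f, C f) := by rw [hcover]
    _ ≤ ∑ f : Fin r → Bool × Bool, μ (C f) := measure_iUnion_fintype_le _ _
  obtain ⟨f₀, -, hf₀⟩ := Finset.exists_mem_eq_sup (Finset.univ : Finset (Fin r → Bool × Bool))
    Finset.univ_nonempty (fun f => μ (C f))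
  have hcard : (Finset.univ : Finset (Fin r → Bool × Bool)).card = 4 ^ r := by
    simp [Finset.card_univ]
  have hbig : (1 : ENNReal) ≤ 4 ^ r * μ (C f₀) := by
    calc (1 : ENNReal) ≤ ∑ f : Fin r → Bool × Bool, μ (C f) := hsum
    _ ≤ (Finset.univ : Finset (Fin r → Bool × Bool)).card • μ (C f₀) := by
        refine Finset.sum_le_card_nsmul _ _ _ fun f _ => ?_
        rw [← hf₀]
        exact Finset.le_sup (f := fun g => μ (C g)) (Finset.mem_univ f)
    _ = 4 ^ r * μ (C f₀) := by
        rw [hcard, nsmul_eq_mul]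
        norm_num
  have hlow : (1 / 2 : ENNReal) ^ (2 * r) ≤ μ (C f₀) := by
    have h1 : (1 : ENNReal) / 4 ^ r ≤ μ (C f₀) := by
      refine ENNReal.div_le_of_le_mul ?_
      rw [mul_comm]; exact hbig
    calc (1 / 2 : ENNReal) ^ (2 * r) = 1 / 4 ^ r := by
          rw [one_div, ← ENNReal.inv_pow, pow_mul, one_div]
          norm_num
    _ ≤ μ (C f₀) := h1
  have hsub : (⋃ i, (A i) ×ˢ (B i)) ⊆ (C f₀ ×ˢ C f₀)ᶜ := by
    rintro ⟨x, y⟩ hxy ⟨hx, hy⟩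
    obtain ⟨i, hxa, hyb⟩ : ∃ i, x ∈ A i ∧ y ∈ B i := by
      simpa [Set.mem_iUnion, Set.mem_prod] using hxy
    have h1 : (f₀ i).1 = true := ((hmem f₀ x).1 hx i).1.2 hxa
    have h2 : y ∈ A i := ((hmem f₀ y).1 hy i).1.1 h1
    have : y ∈ A i ∩ B i := ⟨h2, hyb⟩
    rw [hdisj i] at this
    exact this
  calc (μ.prod μ) (⋃ i, (A i) ×ˢ (B i)) ≤ (μ.prod μ) ((C f₀ ×ˢ C f₀)ᶜ) := measure_mono hsub
  _ = 1 - (μ.prod μ) (C f₀ ×ˢ C f₀) := by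
      rw [measure_compl ((hmeas f₀).prod (hmeas f₀)) (measure_ne_top _ _), measure_univ]
  _ = 1 - μ (C f₀) * μ (C f₀) := by rw [Measure.prod_prod]
  _ ≤ 1 - (1 / 2 : ENNReal) ^ (4 * r) := by
      refine tsub_le_tsub_left ?_ 1
      calc (1 / 2 : ENNReal) ^ (4 * r) = (1 / 2) ^ (2 * r) * (1 / 2) ^ (2 * r) := by
            rw [← pow_add]; ring_nf
      _ ≤ μ (C f₀) * μ (C f₀) := mul_le_mul' hlow hlow
end

section
/- Let S be an ergodic invertible measure-preserving transformation of a probability space (X, μ) and f : X → ℤ an integrable function with ∫ f dμ = 0. Then the cylindrical cascade (x, a) ↦ (S(x), a + f(x)) on X × ℤ is conservative; equivalently, for almost every x ∈ X, the set of natural numbers N with ∑_{n=0}^{N−1} f(Sⁿ(x)) = 0 is infinite. -/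
/-!
Let `D` be the set of points whose Birkhoff sums never return to `0`. If `μ D > 0`, pick a point
whose orbit visits `D` with frequency `μ D` and whose Birkhoff sums are `o(N)`; the latter holds
almost everywhere by the maximal ergodic theorem and ergodicity. The sums at the visit times are
pairwise distinct integers, since between two visits the sum changes by a nonzero amount. So up
to time `N` there are about `N μ D` distinct values in an interval of length `o(N)`, which is
absurd. Hence `μ D = 0`, and a point whose whole orbit avoids `D` returns to `0` infinitely
often.
-/

open MeasureTheory Filter Set
open scoped Finset

section MaximalErgodic

variable {X : Type*} {T : X → X} {g : X → ℝ}

/-- `maxBirkhoffSum T g N x = max_{n ≤ N} birkhoffSum T g n x`, computed through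
`birkhoffSum T g (n + 1) x = g x + birkhoffSum T g n (T x)`. -/
noncomputable def maxBirkhoffSum (T : X → X) (g : X → ℝ) : ℕ → X → ℝ
  | 0 => 0
  | N + 1 => fun x => max 0 (g x + maxBirkhoffSum T g N (T x))

lemma maxBirkhoffSum_nonneg (N : ℕ) (x : X) : 0 ≤ maxBirkhoffSum T g N x := by
  cases N
  · exact le_rfl
  · exact le_max_left _ _

lemma monotone_maxBirkhoffSum (x : X) : Monotone (maxBirkhoffSum T g · x) := by
  refine monotone_nat_of_le_succ fun N => ?_
  induction N generalizing x with
  | zero => exact maxBirkhoffSum_nonneg 1 x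
  | succ N ih => exact max_le_max le_rfl (by gcongr; exact ih (T x))

lemma birkhoffSum_le_maxBirkhoffSum {n N : ℕ} (h : n ≤ N) (x : X) :
    birkhoffSum T g n x ≤ maxBirkhoffSum T g N x := by
  induction n generalizing N x with
  | zero => simpa using maxBirkhoffSum_nonneg N x
  | succ n ih =>
    cases N with
    | zero => omega
    | succ N =>
      rw [birkhoffSum_succ']
      exact le_max_of_le_right (by gcongr; exact ih (by omega) (T x))

lemma maxBirkhoffSum_le_add_apply {N : ℕ} {x : X} (hx : 0 < maxBirkhoffSum T g N x) :
    maxBirkhoffSum T g N x ≤ g x + maxBirkhoffSum T g N (T x) := by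
  cases N with
  | zero => exact absurd hx (lt_irrefl 0)
  | succ N =>
    have hpos : 0 < g x + maxBirkhoffSum T g N (T x) :=
      (lt_max_iff.1 hx).resolve_left (lt_irrefl 0)
    calc maxBirkhoffSum T g (N + 1) x = g x + maxBirkhoffSum T g N (T x) := max_eq_right hpos.le
      _ ≤ g x + maxBirkhoffSum T g (N + 1) (T x) := by
        gcongr; exact monotone_maxBirkhoffSum _ N.le_succ

variable [MeasurableSpace X]

lemma measurable_birkhoffSum {M : Type*} [AddCommMonoid M] [MeasurableSpace M] [MeasurableAdd₂ M]
    {f : X → M} (hT : Measurable T) (hf : Measurable f) (n : ℕ) :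
    Measurable (birkhoffSum T f n) :=
  Finset.measurable_sum _ fun k _ => hf.comp (hT.iterate k)

lemma measurable_maxBirkhoffSum (hT : Measurable T) (hg : Measurable g) (N : ℕ) :
    Measurable (maxBirkhoffSum T g N) := by
  induction N with
  | zero => exact measurable_const
  | succ N ih => exact measurable_const.max (hg.add (ih.comp hT))

variable {μ : Measure X}

lemma integrable_maxBirkhoffSum (hT : MeasurePreserving T μ μ) (hg : Integrable g μ) (N : ℕ) :
    Integrable (maxBirkhoffSum T g N) μ := by
  induction N with
  | zero => exact integrable_zero _ _ _
  | succ N ih => exact (integrable_zero _ _ _).sup (hg.add (hT.integrable_comp_of_integrable ih))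

/-- Maximal ergodic theorem, by Garsia's argument: on `{M > 0}` we have `M ≤ g + M ∘ T`, and
`M ∘ T` has the same integral as `M`. -/
theorem setIntegral_setOf_maxBirkhoffSum_pos_nonneg (hT : MeasurePreserving T μ μ)
    (hg : Measurable g) (hgi : Integrable g μ) (N : ℕ) :
    0 ≤ ∫ x in {x | 0 < maxBirkhoffSum T g N x}, g x ∂μ := by
  set M := maxBirkhoffSum T g N
  set P := {x | 0 < M x}
  have hMm : Measurable M := measurable_maxBirkhoffSum hT.measurable hg N
  have hMi : Integrable M μ := integrable_maxBirkhoffSum hT hgi N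
  have hMTi : Integrable (M ∘ T) μ := hT.integrable_comp_of_integrable hMi
  have hPm : MeasurableSet P := measurableSet_lt measurable_const hMm
  calc (0 : ℝ) = ∫ x, M x ∂μ - ∫ x, M (T x) ∂μ := by
        rw [← integral_map hT.measurable.aemeasurable hMm.aestronglyMeasurable, hT.map_eq,
          sub_self]
    _ = ∫ x in P, M x ∂μ - ∫ x, M (T x) ∂μ := by
        rw [← setIntegral_eq_integral_of_forall_compl_eq_zero (s := P) fun x hx =>
          (not_lt.1 hx).antisymm (maxBirkhoffSum_nonneg N x)]
    _ ≤ ∫ x in P, M x ∂μ - ∫ x in P, M (T x) ∂μ := sub_le_sub_left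
          (setIntegral_le_integral hMTi (.of_forall fun x => maxBirkhoffSum_nonneg N (T x))) _
    _ = ∫ x in P, (M x - M (T x)) ∂μ := (integral_sub hMi.integrableOn hMTi.integrableOn).symm
    _ ≤ ∫ x in P, g x ∂μ := setIntegral_mono_on (hMi.sub hMTi).integrableOn hgi.integrableOn hPm
        fun x hx => by linarith [maxBirkhoffSum_le_add_apply (T := T) (g := g) hx]

theorem setIntegral_iUnion_setOf_maxBirkhoffSum_pos_nonneg (hT : MeasurePreserving T μ μ)
    (hg : Measurable g) (hgi : Integrable g μ) :
    0 ≤ ∫ x in ⋃ N, {x | 0 < maxBirkhoffSum T g N x}, g x ∂μ :=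
  ge_of_tendsto
    (tendsto_setIntegral_of_monotone
      (fun N => measurableSet_lt measurable_const (measurable_maxBirkhoffSum hT.measurable hg N))
      (fun _ _ hNM _ hx => hx.trans_le (monotone_maxBirkhoffSum _ hNM)) hgi.integrableOn)
    (.of_forall (setIntegral_setOf_maxBirkhoffSum_pos_nonneg hT hg hgi))

end MaximalErgodic

section ErgodicBounds

variable {X : Type*} {T : X → X} {g : X → ℝ}

lemma bddAbove_range_birkhoffSum_apply_iff (x : X) :
    BddAbove (range fun n => birkhoffSum T g n (T x)) ↔
      BddAbove (range fun n => birkhoffSum T g n x) := by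
  rw [← Nat.range_of_succ (fun n => birkhoffSum T g n x), bddAbove_union,
    and_iff_right bddAbove_singleton]
  simp only [Function.comp_def, birkhoffSum_succ', bddAbove_def, forall_mem_range]
  constructor
  · rintro ⟨M, hM⟩
    exact ⟨g x + M, fun n => by linarith [hM n]⟩
  · rintro ⟨M, hM⟩
    exact ⟨M - g x, fun n => by linarith [hM n]⟩

variable [MeasurableSpace X] {μ : Measure X}

/-- The set where the Birkhoff sums are unbounded above is invariant, so by ergodicity it is
null or conull; if it were conull, the maximal ergodic theorem would give `0 ≤ ∫ g`. -/
theorem Ergodic.ae_bddAbove_birkhoffSum_of_integral_neg (hT : Ergodic T μ) (hg : Measurable g)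
    (hgi : Integrable g μ) (hneg : ∫ x, g x ∂μ < 0) :
    ∀ᵐ x ∂μ, BddAbove (range fun n => birkhoffSum T g n x) := by
  set B := {x | BddAbove (range fun n => birkhoffSum T g n x)}
  have hBm : MeasurableSet B :=
    measurableSet_bddAbove_range (measurable_birkhoffSum hT.measurable hg)
  have hBinv : T ⁻¹' B = B := by
    ext x
    exact bddAbove_range_birkhoffSum_apply_iff x
  refine (hT.measure_self_or_compl_eq_zero hBm hBinv).elim (fun hB => ?_) ae_iff.2
  have hunbdd : ∀ᵐ x ∂μ, x ∈ ⋃ N, {x | 0 < maxBirkhoffSum T g N x} := by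
    filter_upwards [measure_eq_zero_iff_ae_notMem.1 hB] with x hx
    obtain ⟨_, ⟨n, rfl⟩, hn⟩ := not_bddAbove_iff.1 hx 0
    exact mem_iUnion.2 ⟨n, hn.trans_le (birkhoffSum_le_maxBirkhoffSum le_rfl x)⟩
  have := setIntegral_iUnion_setOf_maxBirkhoffSum_pos_nonneg hT.toMeasurePreserving hg hgi
  rw [setIntegral_eq_integral_of_ae_compl_eq_zero (hunbdd.mono fun x hx hx' => absurd hx hx')]
    at this
  linarith

theorem Ergodic.ae_exists_birkhoffSum_le [IsFiniteMeasure μ] [NeZero μ] (hT : Ergodic T μ)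
    (hg : Measurable g) (hgi : Integrable g μ) (hg0 : ∫ x, g x ∂μ = 0) {c : ℝ} (hc : 0 < c) :
    ∀ᵐ x ∂μ, ∃ M, ∀ n : ℕ, birkhoffSum T g n x ≤ c * n + M := by
  have hneg : ∫ x, (g - Function.const X c) x ∂μ < 0 := by
    simp only [Pi.sub_apply, Function.const_apply]
    rw [integral_sub hgi (integrable_const c), hg0, integral_const, smul_eq_mul]
    have := measureReal_univ_pos (μ := μ)
    nlinarith
  filter_upwards [hT.ae_bddAbove_birkhoffSum_of_integral_neg (hg.sub measurable_const)
    (hgi.sub (integrable_const c)) hneg] with x ⟨M, hM⟩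
  refine ⟨M, fun n => ?_⟩
  have hconst : birkhoffSum T (fun _ => c) n x = n * c := by simp [birkhoffSum]
  have := hM (mem_range_self n)
  rw [birkhoffSum_sub, hconst] at this
  linarith

theorem Ergodic.ae_exists_abs_birkhoffSum_le [IsFiniteMeasure μ] [NeZero μ] (hT : Ergodic T μ)
    (hg : Measurable g) (hgi : Integrable g μ) (hg0 : ∫ x, g x ∂μ = 0) {c : ℝ} (hc : 0 < c) :
    ∀ᵐ x ∂μ, ∃ M, ∀ n : ℕ, |birkhoffSum T g n x| ≤ c * n + M := by
  filter_upwards [hT.ae_exists_birkhoffSum_le hg hgi hg0 hc,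
    hT.ae_exists_birkhoffSum_le hg.neg hgi.neg (by simp [integral_neg, hg0]) hc]
    with x ⟨M₁, hM₁⟩ ⟨M₂, hM₂⟩
  refine ⟨max M₁ M₂, fun n => abs_le.2 ⟨?_, ?_⟩⟩
  · have := hM₂ n
    rw [birkhoffSum_neg] at this
    linarith [le_max_right M₁ M₂]
  · linarith [hM₁ n, le_max_left M₁ M₂]

end ErgodicBounds

section Recurrence

variable {X M : Type*} {T : X → X}

def noReturnSet [AddCommMonoid M] (T : X → X) (f : X → M) : Set X :=
  {x | ∀ n, 0 < n → birkhoffSum T f n x ≠ 0}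

lemma injOn_birkhoffSum_setOf_iterate_mem_noReturnSet [AddCommMonoid M] [IsLeftCancelAdd M]
    (f : X → M) (x : X) :
    InjOn (fun n => birkhoffSum T f n x) {n | T^[n] x ∈ noReturnSet T f} := by
  intro n hn m hm heq
  by_contra hne
  wlog hlt : n < m generalizing n m
  · exact this hm hn heq.symm (Ne.symm hne) (by omega)
  have hsplit := birkhoffSum_add T f n (m - n) x
  rw [Nat.add_sub_cancel' hlt.le] at hsplit
  exact hn (m - n) (by omega) (by simp_all)

lemma infinite_setOf_birkhoffSum_eq_zero [AddCommMonoid M] {f : X → M} {x : X}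
    (h : ∀ k, T^[k] x ∉ noReturnSet T f) : {N | birkhoffSum T f N x = 0}.Infinite := by
  suffices ∀ a, ∃ b, a ≤ b ∧ birkhoffSum T f b x = 0 from
    infinite_of_forall_exists_gt fun a => (this (a + 1)).imp fun b hb => ⟨hb.2, hb.1⟩
  intro a
  induction a with
  | zero => exact ⟨0, le_rfl, birkhoffSum_zero T f x⟩
  | succ a ih =>
    obtain ⟨b, hab, hb⟩ := ih
    obtain ⟨m, hm, hm0⟩ : ∃ m, 0 < m ∧ birkhoffSum T f m (T^[b] x) = 0 := by
      simpa [noReturnSet] using h b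
    exact ⟨b + m, by omega, by rw [birkhoffSum_add, hb, hm0, zero_add]⟩

lemma birkhoffSum_indicator_one (s : Set X) [DecidablePred (· ∈ s)] (n : ℕ) (x : X) :
    birkhoffSum T (s.indicator 1) n x = (#{k ∈ Finset.range n | T^[k] x ∈ s} : ℝ) := by
  simp [birkhoffSum, Set.indicator_apply]

lemma card_le_of_injOn_abs_le {ι : Type*} {s : Finset ι} {φ : ι → ℤ} (hφ : InjOn φ s) {r : ℝ}
    (hr : 0 ≤ r) (hbound : ∀ i ∈ s, |(φ i : ℝ)| ≤ r) : (#s : ℝ) ≤ 2 * r + 1 := by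
  set K := ⌊r⌋
  have hK : 0 ≤ K := Int.floor_nonneg.2 hr
  have hmaps : ∀ i ∈ s, φ i ∈ Finset.Icc (-K) K := by
    intro i hi
    have := abs_le.1 (hbound i hi)
    rw [Finset.mem_Icc, neg_le, Int.le_floor, Int.le_floor]
    push_cast
    constructor <;> linarith
  have hcard : #s ≤ 2 * K.toNat + 1 := by
    have := Finset.card_le_card_of_injOn φ hmaps hφ
    rw [Int.card_Icc] at this
    omega
  calc (#s : ℝ) ≤ 2 * (K.toNat : ℝ) + 1 := by exact_mod_cast hcard
    _ ≤ 2 * r + 1 := by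
      have : ((K.toNat : ℤ) : ℝ) ≤ r := by rw [Int.toNat_of_nonneg hK]; exact Int.floor_le r
      push_cast at this
      linarith

lemma card_filter_iterate_mem_noReturnSet_le {f : X → ℤ} [DecidablePred (· ∈ noReturnSet T f)]
    {x : X} {c M : ℝ} (hc : 0 ≤ c)
    (hM : ∀ n : ℕ, |birkhoffSum T (fun y => (f y : ℝ)) n x| ≤ c * n + M) (N : ℕ) :
    (#{n ∈ Finset.range N | T^[n] x ∈ noReturnSet T f} : ℝ) ≤ 2 * (c * N + M) + 1 := by
  have hM0 : 0 ≤ M := by simpa using hM 0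
  refine card_le_of_injOn_abs_le (φ := fun n => birkhoffSum T f n x)
    ((injOn_birkhoffSum_setOf_iterate_mem_noReturnSet f x).mono
      fun n hn => (Finset.mem_filter.1 hn).2) (by positivity) fun n hn => ?_
  have hnN : (n : ℝ) ≤ N := by exact_mod_cast (Finset.mem_range.1 (Finset.mem_filter.1 hn).1).le
  rw [show ((birkhoffSum T f n x : ℤ) : ℝ) = birkhoffSum T (fun y => (f y : ℝ)) n x from
    map_birkhoffSum (Int.castAddHom ℝ) T f n x]
  nlinarith [hM n]

variable [MeasurableSpace X] {μ : Measure X}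

lemma measurableSet_noReturnSet [AddCommMonoid M] [MeasurableSpace M] [MeasurableSingletonClass M]
    [MeasurableAdd₂ M] {f : X → M} (hT : Measurable T) (hf : Measurable f) :
    MeasurableSet (noReturnSet T f) := by
  simp only [noReturnSet, ofPred_forall]
  exact .iInter fun n => .iInter fun _ =>
    ((measurableSet_singleton 0).preimage (measurable_birkhoffSum hT hf n)).compl

theorem Ergodic.measure_noReturnSet_eq_zero [IsProbabilityMeasure μ] (hT : Ergodic T μ)
    {f : X → ℤ} (hf : Measurable f) (hfi : Integrable (fun x => (f x : ℝ)) μ)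
    (hf0 : ∫ x, (f x : ℝ) ∂μ = 0) : μ (noReturnSet T f) = 0 := by
  set D := noReturnSet T f
  have := Classical.decPred (· ∈ D)
  have hDm : MeasurableSet D := measurableSet_noReturnSet hT.measurable hf
  by_contra hD
  set d := μ.real D
  have hd : 0 < d := ENNReal.toReal_pos hD (measure_ne_top μ D)
  set ε := d / 4
  have hε : 0 < ε := by positivity
  have hvisits := hT.ae_exists_abs_birkhoffSum_le (g := D.indicator 1 - fun _ => d)
    ((measurable_const.indicator hDm).sub measurable_const)
    (((integrable_const 1).indicator hDm).sub (integrable_const d))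
    (by rw [integral_sub' (f := D.indicator 1) ((integrable_const 1).indicator hDm)
          (integrable_const d), integral_indicator_one hDm, integral_const, probReal_univ,
          one_smul, sub_self]) hε
  have hsums := hT.ae_exists_abs_birkhoffSum_le (g := fun x => (f x : ℝ))
    (measurable_from_top.comp hf) hfi hf0 hε
  obtain ⟨x, ⟨M₁, hM₁⟩, ⟨M₂, hM₂⟩⟩ := (hvisits.and hsums).exists
  obtain ⟨N, hN⟩ := exists_nat_gt ((M₁ + 2 * M₂ + 3) / ε)
  set V := (Finset.range N).filter (fun n => T^[n] x ∈ D)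
  have hlower : (d - ε) * N - M₁ ≤ #V := by
    have hconst : birkhoffSum T (fun _ => d) N x = N * d := by simp [birkhoffSum]
    have := (abs_le.1 (hM₁ N)).1
    rw [birkhoffSum_sub, birkhoffSum_indicator_one, hconst] at this
    linarith
  have hupper := card_filter_iterate_mem_noReturnSet_le hε.le hM₂ N
  rw [div_lt_iff₀ hε] at hN
  have hdN : d * N = 4 * (ε * N) := by ring
  linarith

theorem Ergodic.ae_infinite_setOf_birkhoffSum_eq_zero [IsProbabilityMeasure μ]
    (hT : Ergodic T μ) {f : X → ℤ} (hf : Measurable f) (hfi : Integrable (fun x => (f x : ℝ)) μ)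
    (hf0 : ∫ x, (f x : ℝ) ∂μ = 0) : ∀ᵐ x ∂μ, {N | birkhoffSum T f N x = 0}.Infinite := by
  have hD := measure_eq_zero_iff_ae_notMem.1 (hT.measure_noReturnSet_eq_zero hf hfi hf0)
  have horbit : ∀ᵐ x ∂μ, ∀ k, T^[k] x ∉ noReturnSet T f :=
    ae_all_iff.2 fun k => (hT.toMeasurePreserving.iterate k).quasiMeasurePreserving.ae hD
  exact horbit.mono fun x hx => infinite_setOf_birkhoffSum_eq_zero hx

end Recurrence

theorem stmt8_general {X : Type*} [MeasurableSpace X] (μ : Measure X) [IsProbabilityMeasure μ]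
    (S : X → X) (hS : Ergodic S μ)
    (f : X → ℤ) (hf : Integrable (fun x => (f x : ℝ)) μ)
    (hf0 : ∫ x, (f x : ℝ) ∂μ = 0) :
    ∀ᵐ x ∂μ, {N : ℕ | ∑ n ∈ Finset.range N, f (S^[n] x) = 0}.Infinite := by
  obtain ⟨f', hf'm, hff'⟩ : AEMeasurable f μ :=
    Int.isClosedEmbedding_coe_real.measurableEmbedding.aemeasurable_comp_iff.1 hf.aemeasurable
  have hcast : (fun x => (f x : ℝ)) =ᵐ[μ] fun x => (f' x : ℝ) := hff'.fun_comp _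
  have hsums : ∀ᵐ x ∂μ, ∀ N, birkhoffSum S f N x = birkhoffSum S f' N x :=
    ae_all_iff.2 fun N => hS.quasiMeasurePreserving.birkhoffSum_ae_eq_of_ae_eq hff' N
  filter_upwards [hS.ae_infinite_setOf_birkhoffSum_eq_zero hf'm (hf.congr hcast)
    (by rwa [← integral_congr_ae hcast]), hsums] with x hx hxN
  show {N | birkhoffSum S f N x = 0}.Infinite
  simpa only [hxN] using hx

/-- Krygin–Atkinson theorem (recurrence form): if `S` is an ergodic invertible
measure-preserving transformation of a probability space `(X, μ)` and `f : X → ℤ` is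
integrable with `∫ f dμ = 0`, then for almost every `x` the set of natural numbers
`N` with `∑_{n=0}^{N−1} f(Sⁿ x) = 0` is infinite (i.e. the cylindrical cascade
`(x, a) ↦ (S x, a + f x)` is conservative). -/
theorem stmt8 {X : Type*} [MeasurableSpace X] (μ : Measure X) [IsProbabilityMeasure μ]
    (S : X → X) (hSbij : Function.Bijective S) (hS : Ergodic S μ)
    (f : X → ℤ) (hf : Integrable (fun x => (f x : ℝ)) μ)
    (hf0 : ∫ x, (f x : ℝ) ∂μ = 0) :
    ∀ᵐ x ∂μ, {N : ℕ | ∑ n ∈ Finset.range N, f (S^[n] x) = 0}.Infinite :=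
  stmt8_general μ S hS f hf hf0
end

section
/- Let T be an ergodic unitary Koopman operator on L²(μ) of a probability-measure-preserving automorphism, and suppose that for some sequence k_i → ∞ and some a ∈ (0,1), T^{k_i} converges in the weak operator topology to aI + (1−a)T. Then T is weakly mixing, i.e. T has no eigenfunctions other than constants. -/
/-!
An eigenfunction `f` with `T f = λ f` has `|λ| = 1`, and `⟪T^{k_i} f, f⟫ = conj(λ^{k_i}) ‖f‖²`
has modulus `‖f‖²`; passing to the weak limit gives `|a + (1 - a) λ| = 1`. By strict convexity
of the unit disc, a proper convex combination of `1` and `λ` has modulus `1` only if `λ = 1`,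
so `f` is `T`-invariant and hence constant by ergodicity.
-/

open MeasureTheory Filter

theorem eq_of_norm_combo_eq {E : Type*} [NormedAddCommGroup E] [NormedSpace ℝ E]
    [StrictConvexSpace ℝ E] {x y : E} {a r : ℝ} (hx : ‖x‖ ≤ r) (hy : ‖y‖ ≤ r)
    (ha0 : 0 < a) (ha1 : a < 1) (h : ‖a • x + (1 - a) • y‖ = r) : x = y := by
  by_contra hne
  exact (norm_combo_lt_of_ne hx hy hne ha0 (sub_pos.2 ha1) (add_sub_cancel a 1)).ne h

namespace LinearIsometryEquiv

variable {𝕜 E : Type*} [NormedField 𝕜] [NormedAddCommGroup E] [NormedSpace 𝕜 E]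
  {T : E ≃ₗᵢ[𝕜] E} {lam : 𝕜} {f : E}

theorem pow_apply_of_apply_eq_smul (hf : T f = lam • f) (n : ℕ) : (T ^ n) f = lam ^ n • f := by
  induction n with
  | zero => simp
  | succ n ih => rw [pow_succ, coe_mul, Function.comp_apply, hf, map_smul, ih, smul_smul, pow_succ']

theorem norm_eq_one_of_apply_eq_smul (hf0 : f ≠ 0) (hf : T f = lam • f) : ‖lam‖ = 1 := by
  have h := T.norm_map f
  rw [hf, norm_smul] at h
  exact (mul_eq_right₀ (norm_ne_zero_iff.2 hf0)).1 h

end LinearIsometryEquiv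

section

variable {𝕜 E : Type*} [RCLike 𝕜] [NormedAddCommGroup E] [InnerProductSpace 𝕜 E]

theorem norm_inner_smul_self (c : 𝕜) (f : E) : ‖inner 𝕜 (c • f) f‖ = ‖c‖ * ‖f‖ ^ 2 := by
  rw [inner_smul_left, norm_mul, RCLike.norm_conj, inner_self_eq_norm_sq_to_K, norm_pow,
    RCLike.norm_ofReal, abs_norm]

end

theorem stmt9_general {X : Type*} [MeasurableSpace X] (μ : Measure X) [IsProbabilityMeasure μ]
    (T : Lp ℂ 2 μ ≃ₗᵢ[ℂ] Lp ℂ 2 μ)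
    (herg : ∀ f : Lp ℂ 2 μ, T f = f → ∃ c : ℂ, f = c • (Lp.const 2 μ (1 : ℂ)))
    (k : ℕ → ℕ)
    (a : ℝ) (ha0 : 0 < a) (ha1 : a < 1)
    (hweak : ∀ f g : Lp ℂ 2 μ,
      Tendsto (fun i => (inner ℂ ((T ^ k i) f) g : ℂ)) atTop
        (nhds (inner ℂ ((a : ℂ) • f + ((1 - a : ℝ) : ℂ) • T f) g))) :
    ∀ (lam : ℂ) (f : Lp ℂ 2 μ), T f = lam • f → ∃ c : ℂ, f = c • (Lp.const 2 μ (1 : ℂ)) := by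
  intro lam f hf
  obtain rfl | hf0 := eq_or_ne f 0
  · exact ⟨0, (zero_smul ℂ _).symm⟩
  have hlam := T.norm_eq_one_of_apply_eq_smul hf0 hf
  have hcombo : (a : ℂ) • f + ((1 - a : ℝ) : ℂ) • T f = (a • (1 : ℂ) + (1 - a) • lam) • f := by
    rw [hf, smul_smul, ← add_smul, Complex.real_smul, Complex.real_smul, mul_one]
  have hlim := (hweak f f).norm
  simp only [T.pow_apply_of_apply_eq_smul hf, norm_inner_smul_self, norm_pow, hlam, one_pow,
    one_mul, hcombo] at hlim
  have hnorm : ‖a • (1 : ℂ) + (1 - a) • lam‖ = 1 := by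
    have := tendsto_nhds_unique tendsto_const_nhds hlim
    exact (mul_eq_right₀ (pow_ne_zero 2 (norm_ne_zero_iff.2 hf0))).1 this.symm
  have hlam1 : (1 : ℂ) = lam := eq_of_norm_combo_eq norm_one.le hlam.le ha0 ha1 hnorm
  exact herg f (by rw [hf, ← hlam1, one_smul])

/-- If `T` is the ergodic unitary Koopman operator of a probability-measure-preserving
automorphism and, for some sequence `k_i → ∞` and some `a ∈ (0,1)`,
`T^{k_i} → aI + (1−a)T` in the weak operator topology, then `T` is weakly mixing:
every eigenfunction of `T` is constant. -/
theorem stmt9 {X : Type*} [MeasurableSpace X] (μ : Measure X) [IsProbabilityMeasure μ]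
    (T : Lp ℂ 2 μ ≃ₗᵢ[ℂ] Lp ℂ 2 μ)
    (hT1 : T (Lp.const 2 μ (1 : ℂ)) = Lp.const 2 μ (1 : ℂ))
    (herg : ∀ f : Lp ℂ 2 μ, T f = f → ∃ c : ℂ, f = c • (Lp.const 2 μ (1 : ℂ)))
    (k : ℕ → ℕ) (hk : Tendsto k atTop atTop)
    (a : ℝ) (ha0 : 0 < a) (ha1 : a < 1)
    (hweak : ∀ f g : Lp ℂ 2 μ,
      Tendsto (fun i => (inner ℂ ((T ^ k i) f) g : ℂ)) atTop
        (nhds (inner ℂ ((a : ℂ) • f + ((1 - a : ℝ) : ℂ) • T f) g))) :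
    ∀ (lam : ℂ) (f : Lp ℂ 2 μ), T f = lam • f → ∃ c : ℂ, f = c • (Lp.const 2 μ (1 : ℂ)) :=
  stmt9_general μ T herg k a ha0 ha1 hweak
end

section
/- Let T be an ergodic unitary Koopman operator on L²(μ), let H ⊂ L²(μ) be the orthogonal complement of the constants, and suppose T^{k_i} → aI + (1−a)T weakly for some sequence k_i → ∞ and a ∈ (0,1). If J : H → H ⊗ H is a bounded operator satisfying J T = (T ⊗ T) J, then J = 0. -/
/-!
Put `S = a + (1 - a) T`. Since `T ⊗ T` is unitary and `T^{k_i} → S` weakly, also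
`(T ⊗ T)^{k_i} → S ⊗ S` weakly: this holds on elementary tensors, hence everywhere by density
and uniform boundedness. Passing to the limit in `J T^{k_i} = (T ⊗ T)^{k_i} J` gives
`J S = (S ⊗ S) J`; expanding both sides leaves `a (1 - a) ((T - 1) ⊗ (T - 1)) J = 0`, that is,
`J x ⊥ (T⁻¹ - 1) p ⊗ (T⁻¹ - 1) q` for all `p, q`. By ergodicity `T⁻¹ - 1` has dense range, so
`J x` is orthogonal to every elementary tensor and therefore vanishes.
-/

open Filter Topology

theorem LinearIsometryEquiv.coe_pow {R E : Type*} [Semiring R] [SeminormedAddCommGroup E]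
    [Module R E] (T : E ≃ₗᵢ[R] E) (n : ℕ) : ⇑(T ^ n) = T^[n] :=
  hom_coe_pow _ rfl (fun _ _ ↦ rfl) _ _

theorem ContinuousLinearMap.tendsto_apply_of_dense_span {𝕜 E F ι : Type*}
    [NontriviallyNormedField 𝕜] [NormedAddCommGroup E] [NormedSpace 𝕜 E]
    [NormedAddCommGroup F] [NormedSpace 𝕜 F] {l : Filter ι}
    {f : ι → E →L[𝕜] F} {g : E →L[𝕜] F} {C : ℝ} (hf : ∀ i, ‖f i‖ ≤ C) {s : Set E}
    (hs : Dense (Submodule.span 𝕜 s : Set E)) (h : ∀ w ∈ s, Tendsto (f · w) l (𝓝 (g w)))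
    (w : E) : Tendsto (f · w) l (𝓝 (g w)) := by
  have hequi : Equicontinuous ((↑) ∘ f) :=
    ((NormedSpace.equicontinuous_TFAE f).out 5 1).mp (by exact ⟨C, hf⟩)
  have hclosed : IsClosed {w | Tendsto (f · w) l (𝓝 (g w))} :=
    hequi.isClosed_setOfPred_tendsto g.continuous
  have hspan : (Submodule.span 𝕜 s : Set E) ⊆ {w | Tendsto (f · w) l (𝓝 (g w))} := by
    intro w hw
    induction hw using Submodule.span_induction with
    | mem w hw => exact h w hw
    | zero => simpa using tendsto_const_nhds
    | add w₁ w₂ _ _ h₁ h₂ => simpa using h₁.add h₂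
    | smul c w _ hw => simpa using hw.const_smul c
  exact hclosed.closure_subset_iff.mpr hspan (hs w)

theorem ContinuousLinearMap.eq_zero_of_denseRange₂ {𝕜 E F G E' F' : Type*}
    [NontriviallyNormedField 𝕜] [NormedAddCommGroup E] [NormedSpace 𝕜 E]
    [NormedAddCommGroup F] [NormedSpace 𝕜 F] [NormedAddCommGroup G] [NormedSpace 𝕜 G]
    (B : E →L[𝕜] F →L[𝕜] G) {A : E' → E} {A' : F' → F} (hA : DenseRange A)
    (hA' : DenseRange A') (h : ∀ p q, B (A p) (A' q) = 0) : B = 0 := by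
  have h₁ : ∀ p, B (A p) = 0 := fun p ↦ DFunLike.coe_injective <|
    hA'.equalizer (B (A p)).continuous continuous_zero (funext (h p))
  exact DFunLike.coe_injective <| hA.equalizer B.continuous continuous_zero (funext h₁)

theorem LinearIsometryEquiv.denseRange_sub_one {𝕜 E : Type*} [RCLike 𝕜] [NormedAddCommGroup E]
    [InnerProductSpace 𝕜 E] [CompleteSpace E] (T : E ≃ₗᵢ[𝕜] E) (hT : ∀ f, T f = f → f = 0) :
    DenseRange ((T : E →L[𝕜] E) - 1 : E →L[𝕜] E) := by
  change Dense ((LinearMap.range (((T : E →L[𝕜] E) - 1 : E →L[𝕜] E) : E →ₗ[𝕜] E) : Set E))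
  rw [Submodule.dense_iff_topologicalClosure_eq_top,
    Submodule.topologicalClosure_eq_top_iff, ContinuousLinearMap.orthogonal_range,
    Submodule.eq_bot_iff]
  intro z hz
  rw [LinearMap.mem_ker, map_sub, LinearIsometryEquiv.adjoint_eq_symm,
    ContinuousLinearMap.adjoint_one] at hz
  have hz' : T.symm z = z := sub_eq_zero.mp hz
  exact hT z (T.symm_apply_eq.mp hz').symm

section TensorSquare

variable {𝕜 H K : Type*} [RCLike 𝕜]
  [NormedAddCommGroup H] [InnerProductSpace 𝕜 H] [NormedAddCommGroup K] [InnerProductSpace 𝕜 K]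
  {tp : H →ₗ[𝕜] H →ₗ[𝕜] K}
  (htp_inner : ∀ u v u' v' : H, inner 𝕜 (tp u v) (tp u' v') = inner 𝕜 u u' * inner 𝕜 v v')
  (htp_dense : Dense (Submodule.span 𝕜 (Set.range fun p : H × H => tp p.1 p.2) : Set K))

include htp_inner in
theorem norm_tp (u v : H) : ‖tp u v‖ = ‖u‖ * ‖v‖ := by
  have h := htp_inner u v u v
  simp only [inner_self_eq_norm_sq_to_K] at h
  have h' : ‖tp u v‖ ^ 2 = (‖u‖ * ‖v‖) ^ 2 := by rw [mul_pow]; exact_mod_cast h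
  exact (pow_left_inj₀ (norm_nonneg _) (by positivity) two_ne_zero).mp h'

include htp_dense in
theorem eq_zero_of_inner_tp_eq_zero {y : K} (h : ∀ u v, inner 𝕜 y (tp u v) = 0) : y = 0 := by
  have : innerSL 𝕜 y = 0 :=
    ContinuousLinearMap.ext_on htp_dense (by rintro _ ⟨⟨u, v⟩, rfl⟩; exact h u v)
  simpa using congrArg (fun L => L y) this

include htp_inner in
theorem inner_tp_eq_zero_of_denseRange {H' : Type*} {A : H' → H} (hA : DenseRange A) {y : K}
    (h : ∀ p q, inner 𝕜 y (tp (A p) (A q)) = 0) (u v : H) : inner 𝕜 y (tp u v) = 0 := by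
  let B : H →L[𝕜] H →L[𝕜] 𝕜 := (tp.compr₂ (innerₛₗ 𝕜 y)).mkContinuous₂ ‖y‖ fun u v ↦ by
    simpa [norm_tp htp_inner, mul_assoc] using norm_inner_le_norm y (tp u v)
  have hB : B = 0 := B.eq_zero_of_denseRange₂ hA hA h
  simpa [B] using congrArg (fun B => B u v) hB

open ContinuousLinearMap in
include htp_inner htp_dense in
theorem tendsto_inner_tp_of_tendsto_inner [CompleteSpace H] {ι : Type*} {l : Filter ι}
    {A : ι → H → H} {A2 : ι → K →ₗᵢ[𝕜] K} (hA2 : ∀ i p q, A2 i (tp p q) = tp (A i p) (A i q))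
    {S : H →L[𝕜] H} (hS : ∀ f g, Tendsto (fun i ↦ inner 𝕜 (A i f) g) l (𝓝 (inner 𝕜 (S f) g)))
    (w : K) (u v : H) :
    Tendsto (fun i ↦ inner 𝕜 (A2 i w) (tp u v)) l
      (𝓝 (inner 𝕜 w (tp (adjoint S u) (adjoint S v)))) := by
  have hS' : ∀ f g, Tendsto (fun i ↦ inner 𝕜 g (A i f)) l (𝓝 (inner 𝕜 g (S f))) := fun f g ↦ by
    simpa only [Function.comp_def, inner_conj_symm] using
      (RCLike.continuous_conj.tendsto _).comp (hS f g)
  have hbound : ∀ i, ‖(innerSL 𝕜 (tp u v)).comp (A2 i).toContinuousLinearMap‖ ≤ ‖tp u v‖ := by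
    intro i
    grw [opNorm_comp_le, LinearIsometry.norm_toContinuousLinearMap_le, innerSL_apply_norm, mul_one]
  have hconj := tendsto_apply_of_dense_span (g := innerSL 𝕜 (tp (adjoint S u) (adjoint S v)))
    hbound htp_dense (by
      rintro _ ⟨⟨p, q⟩, rfl⟩
      simpa only [comp_apply, innerSL_apply_apply, LinearIsometry.coe_toContinuousLinearMap, hA2,
        htp_inner, adjoint_inner_left] using (hS' p u).mul (hS' q v)) w
  simpa only [Function.comp_def, comp_apply, innerSL_apply_apply,
    LinearIsometry.coe_toContinuousLinearMap, inner_conj_symm] using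
    (RCLike.continuous_conj.tendsto _).comp hconj

open ContinuousLinearMap in
include htp_inner htp_dense in
theorem inner_apply_tp_eq_of_tendsto_inner [CompleteSpace H] [CompleteSpace K] {ι : Type*}
    {l : Filter ι} [l.NeBot] {A : ι → H → H} {A2 : ι → K →ₗᵢ[𝕜] K}
    (hA2 : ∀ i p q, A2 i (tp p q) = tp (A i p) (A i q)) {S : H →L[𝕜] H}
    (hS : ∀ f g, Tendsto (fun i ↦ inner 𝕜 (A i f) g) l (𝓝 (inner 𝕜 (S f) g)))
    {J : H →L[𝕜] K} (hJ : ∀ i f, J (A i f) = A2 i (J f)) (x u v : H) :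
    inner 𝕜 (J (S x)) (tp u v) = inner 𝕜 (J x) (tp (adjoint S u) (adjoint S v)) := by
  have hJx : Tendsto (fun i ↦ inner 𝕜 (A2 i (J x)) (tp u v)) l
      (𝓝 (inner 𝕜 (J (S x)) (tp u v))) := by
    simpa only [adjoint_inner_right, hJ] using hS x (adjoint J (tp u v))
  exact tendsto_nhds_unique hJx
    (tendsto_inner_tp_of_tendsto_inner htp_inner htp_dense hA2 hS (J x) u v)

theorem pow_apply_tp (T : H ≃ₗᵢ[𝕜] H) (T2 : K ≃ₗᵢ[𝕜] K)
    (hT2 : ∀ u v, T2 (tp u v) = tp (T u) (T v)) (n : ℕ) (p q : H) :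
    (T2 ^ n) (tp p q) = tp ((T ^ n) p) ((T ^ n) q) := by
  have h : Function.Semiconj (fun pq : H × H ↦ tp pq.1 pq.2) (Prod.map T T) T2 :=
    fun pq ↦ (hT2 pq.1 pq.2).symm
  simpa [LinearIsometryEquiv.coe_pow, Prod.map_iterate] using (h.iterate_right n (p, q)).symm

theorem inner_map_tp (T : H ≃ₗᵢ[𝕜] H) (T2 : K ≃ₗᵢ[𝕜] K)
    (hT2 : ∀ u v, T2 (tp u v) = tp (T u) (T v)) (y : K) (u v : H) :
    inner 𝕜 (T2 y) (tp u v) = inner 𝕜 y (tp (T.symm u) (T.symm v)) := by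
  rw [← T2.inner_map_map y, hT2, T.apply_symm_apply, T.apply_symm_apply]

theorem inner_tp_symm_sub_self_eq_zero (T : H ≃ₗᵢ[𝕜] H) (T2 : K ≃ₗᵢ[𝕜] K)
    (hT2 : ∀ u v, T2 (tp u v) = tp (T u) (T v)) {a : ℝ} (ha0 : 0 < a) (ha1 : a < 1) {y : K}
    (h : ∀ u v, inner 𝕜 ((a : 𝕜) • y + ((1 - a : ℝ) : 𝕜) • T2 y) (tp u v) =
      inner 𝕜 y (tp ((a : 𝕜) • u + ((1 - a : ℝ) : 𝕜) • T.symm u)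
        ((a : 𝕜) • v + ((1 - a : ℝ) : 𝕜) • T.symm v)))
    (p q : H) : inner 𝕜 y (tp (T.symm p - p) (T.symm q - q)) = 0 := by
  have hpq := h p q
  simp only [inner_add_left, inner_smul_left, RCLike.conj_ofReal, inner_map_tp T T2 hT2, map_add,
    map_smul, LinearMap.add_apply, LinearMap.smul_apply, inner_add_right, inner_smul_right] at hpq
  have ha : ((a * (1 - a) : ℝ) : 𝕜) ≠ 0 := by
    exact_mod_cast (mul_pos ha0 (sub_pos.mpr ha1)).ne'
  refine (mul_eq_zero.mp ?_).resolve_left ha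
  simp only [map_sub, LinearMap.sub_apply, inner_sub_right]
  push_cast at hpq ⊢
  linear_combination hpq

end TensorSquare

theorem stmt10_general {H K : Type*}
    [NormedAddCommGroup H] [InnerProductSpace ℂ H] [CompleteSpace H]
    [NormedAddCommGroup K] [InnerProductSpace ℂ K] [CompleteSpace K]
    (tp : H →ₗ[ℂ] H →ₗ[ℂ] K)
    (htp_inner : ∀ u v u' v' : H,
      (inner ℂ (tp u v) (tp u' v') : ℂ) = (inner ℂ u u' : ℂ) * (inner ℂ v v' : ℂ))
    (htp_dense : Dense
      ((Submodule.span ℂ (Set.range fun p : H × H => tp p.1 p.2) : Submodule ℂ K) : Set K))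
    (T : H ≃ₗᵢ[ℂ] H)
    (herg : ∀ f : H, T f = f → f = 0)
    (k : ℕ → ℕ)
    (a : ℝ) (ha0 : 0 < a) (ha1 : a < 1)
    (hweak : ∀ f g : H,
      Tendsto (fun i => (inner ℂ ((T ^ k i) f) g : ℂ)) atTop
        (nhds (inner ℂ ((a : ℂ) • f + ((1 - a : ℝ) : ℂ) • T f) g)))
    (T2 : K ≃ₗᵢ[ℂ] K) (hT2 : ∀ u v : H, T2 (tp u v) = tp (T u) (T v))
    (J : H →L[ℂ] K) (hJ : ∀ f : H, J (T f) = T2 (J f)) :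
    J = 0 := by
  let S : H →L[ℂ] H := (a : ℂ) • 1 + ((1 - a : ℝ) : ℂ) • (T : H →L[ℂ] H)
  have hS_adj : ContinuousLinearMap.adjoint S
      = (a : ℂ) • 1 + ((1 - a : ℝ) : ℂ) • (T.symm : H →L[ℂ] H) := by
    simp only [S, map_add, map_smulₛₗ, ContinuousLinearMap.adjoint_one,
      LinearIsometryEquiv.adjoint_eq_symm, Complex.conj_ofReal]
  have hJpow : ∀ n f, J ((T ^ n) f) = (T2 ^ n) (J f) := fun n f ↦ by
    simpa only [LinearIsometryEquiv.coe_pow] using Function.Semiconj.iterate_right hJ n f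
  have key := inner_apply_tp_eq_of_tendsto_inner htp_inner htp_dense (l := atTop)
    (A2 := fun i ↦ (T2 ^ k i).toLinearIsometry) (fun i ↦ pow_apply_tp T T2 hT2 (k i))
    (S := S) hweak (fun i ↦ hJpow (k i))
  ext x
  refine eq_zero_of_inner_tp_eq_zero htp_dense (inner_tp_eq_zero_of_denseRange htp_inner
    (T.symm.denseRange_sub_one fun f hf ↦ herg f (T.symm_apply_eq.mp hf).symm) fun p q ↦ ?_)
  refine inner_tp_symm_sub_self_eq_zero T T2 hT2 ha0 ha1 (fun u v ↦ ?_) p q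
  convert key x u v using 3
  · simp [S, hJ]
  all_goals simp [hS_adj]

/-- Let `T` be the (restriction to the mean-zero subspace `H` of `L²(μ)` of the)
ergodic unitary Koopman operator of an automorphism (so `T` has no nonzero fixed
vector in `H`), and suppose `T^{k_i} → aI + (1−a)T` weakly for some `k_i → ∞` and
`a ∈ (0,1)`.  Here the Hilbert space `K` together with the bilinear map `tp`, whose
elementary tensors have total span dense in `K` and satisfy
`⟪u⊗v, u'⊗v'⟫ = ⟪u,u'⟫⟪v,v'⟫`, plays the role of `H ⊗ H`, and `T2` is the tensor
square `T ⊗ T`.  If `J : H → H ⊗ H` is a bounded operator with `J T = (T ⊗ T) J`,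
then `J = 0`. -/
theorem stmt10 {H K : Type*}
    [NormedAddCommGroup H] [InnerProductSpace ℂ H] [CompleteSpace H]
    [NormedAddCommGroup K] [InnerProductSpace ℂ K] [CompleteSpace K]
    (tp : H →ₗ[ℂ] H →ₗ[ℂ] K)
    (htp_inner : ∀ u v u' v' : H,
      (inner ℂ (tp u v) (tp u' v') : ℂ) = (inner ℂ u u' : ℂ) * (inner ℂ v v' : ℂ))
    (htp_dense : Dense
      ((Submodule.span ℂ (Set.range fun p : H × H => tp p.1 p.2) : Submodule ℂ K) : Set K))
    (T : H ≃ₗᵢ[ℂ] H)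
    (herg : ∀ f : H, T f = f → f = 0)
    (k : ℕ → ℕ) (hk : Tendsto k atTop atTop)
    (a : ℝ) (ha0 : 0 < a) (ha1 : a < 1)
    (hweak : ∀ f g : H,
      Tendsto (fun i => (inner ℂ ((T ^ k i) f) g : ℂ)) atTop
        (nhds (inner ℂ ((a : ℂ) • f + ((1 - a : ℝ) : ℂ) • T f) g)))
    (T2 : K ≃ₗᵢ[ℂ] K) (hT2 : ∀ u v : H, T2 (tp u v) = tp (T u) (T v))
    (J : H →L[ℂ] K) (hJ : ∀ f : H, J (T f) = T2 (J f)) :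
    J = 0 :=
  stmt10_general tp htp_inner htp_dense T herg k a ha0 ha1 hweak T2 hT2 J hJ
end

section
/- Let T be a unitary operator on a Hilbert space H satisfying: for some sequence k_i → ∞ and a ∈ (0,1), T^{k_i} → aI + (1−a)T in the weak operator topology. Suppose T has a cyclic vector f in H (so T has simple spectrum on H). Define R on H ⊗ H by R(u ⊗ v) = v ⊗ Tu (extended linearly and continuously). Then f ⊗ f is a cyclic vector for R on H ⊗ H; in particular R has simple spectrum on H ⊗ H, and consequently T ⊗ T has spectrum of uniform multiplicity 2 on H ⊗ H. -/
/-!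
The closure `M` of the span of the `R`-orbit of `f ⊗ f` is invariant under all powers of `R`,
in particular under `R ^ (2 * n) = T ^ n ⊗ T ^ n`. A closed subspace is weakly closed, and
`T ^ k i ⊗ T ^ k i → L ⊗ L` weakly on elementary tensors, where `L = a • 1 + (1 - a) • T`;
so `M` is also stable under `u ⊗ v ↦ L u ⊗ L v`. Expanding `L (T ^ d f) ⊗ L f` into four
terms, three of which are already known to lie in `M`, an induction gives `T ^ d f ⊗ f ∈ M`
for all `d ≥ 0`; the shifts by `R ^ (2 * n)` and the swap `R` then give `T ^ m f ⊗ T ^ n f ∈ M`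
for all `m n : ℤ`. Since `f` is cyclic, these tensors have dense span, so `M` is everything.
-/

open Filter Topology Submodule

section WeakConvergence

variable (𝕜 : Type*) {E ι : Type*} [RCLike 𝕜] [NormedAddCommGroup E] [InnerProductSpace 𝕜 E]

def WeakTendsto (x : ι → E) (l : Filter ι) (y : E) : Prop :=
  ∀ z, Tendsto (fun i => (inner 𝕜 (x i) z : 𝕜)) l (𝓝 (inner 𝕜 y z))

variable {𝕜}

theorem weakTendsto_of_dense_span {s : Set E} (hs : Dense (span 𝕜 s : Set E)) {x : ι → E}
    {l : Filter ι} {y : E} {C : ℝ} (hC : ∀ i, ‖x i‖ ≤ C)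
    (h : ∀ z ∈ s, Tendsto (fun i => (inner 𝕜 (x i) z : 𝕜)) l (𝓝 (inner 𝕜 y z))) :
    WeakTendsto 𝕜 x l y := by
  have hspan : ∀ z ∈ span 𝕜 s, Tendsto (fun i => (inner 𝕜 (x i) z : 𝕜)) l (𝓝 (inner 𝕜 y z)) := by
    intro z hz
    induction hz using span_induction with
    | mem z hz => exact h z hz
    | zero => simpa only [inner_zero_right] using tendsto_const_nhds
    | add z w _ _ hz hw => simpa only [inner_add_right] using hz.add hw
    | smul r z _ hz => simpa only [inner_smul_right] using hz.const_mul r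
  have hbdd : ∃ C, ∀ i, ‖innerSL 𝕜 (x i)‖ ≤ C :=
    ⟨C, fun i => (innerSL_apply_norm 𝕜 (x i)).trans_le (hC i)⟩
  have hequi : Equicontinuous fun i => ⇑(innerSL 𝕜 (x i)) :=
    ((NormedSpace.equicontinuous_TFAE fun i => innerSL 𝕜 (x i)).out 5 1).mp hbdd
  have hclosed : IsClosed {z | Tendsto (fun i => (inner 𝕜 (x i) z : 𝕜)) l (𝓝 (inner 𝕜 y z))} :=
    hequi.isClosed_setOfPred_tendsto (innerSL 𝕜 y).continuous
  intro z
  exact hclosed.closure_subset_iff.2 hspan (hs z)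

theorem Submodule.mem_of_weakTendsto [CompleteSpace E] {M : Submodule 𝕜 E}
    (hM : IsClosed (M : Set E)) {x : ι → E} {l : Filter ι} [l.NeBot] {y : E}
    (hx : ∀ i, x i ∈ M) (h : WeakTendsto 𝕜 x l y) : y ∈ M := by
  rw [← hM.submodule_topologicalClosure_eq, ← orthogonal_orthogonal_eq_closure]
  intro w hw
  have hzero : ∀ i, (inner 𝕜 (x i) w : 𝕜) = 0 := fun i => inner_right_of_mem_orthogonal (hx i) hw
  simpa [hzero, inner_eq_zero_symm] using tendsto_nhds_unique (h w) (by simp [hzero])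

end WeakConvergence

section InnerMultiplicative

variable {𝕜 E F G ι : Type*} [RCLike 𝕜] [NormedAddCommGroup E] [InnerProductSpace 𝕜 E]
  [NormedAddCommGroup F] [InnerProductSpace 𝕜 F] [NormedAddCommGroup G] [InnerProductSpace 𝕜 G]
  {tp : E →ₗ[𝕜] F →ₗ[𝕜] G}

theorem norm_apply_apply_of_inner (htp : ∀ u v u' v',
      (inner 𝕜 (tp u v) (tp u' v') : 𝕜) = inner 𝕜 u u' * inner 𝕜 v v') (u : E) (v : F) :
    ‖tp u v‖ = ‖u‖ * ‖v‖ := by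
  have h := htp u v u v
  simp only [inner_self_eq_norm_sq_to_K] at h
  exact (sq_eq_sq₀ (norm_nonneg _) (by positivity)).mp (by rw [mul_pow]; exact_mod_cast h)

theorem continuous_uncurry_of_inner (htp : ∀ u v u' v',
      (inner 𝕜 (tp u v) (tp u' v') : 𝕜) = inner 𝕜 u u' * inner 𝕜 v v') :
    Continuous fun p : E × F => tp p.1 p.2 :=
  (tp.mkContinuous₂ 1 fun u v => by
    rw [norm_apply_apply_of_inner htp, one_mul]).continuous₂

theorem WeakTendsto.apply_apply (htp : ∀ u v u' v',
      (inner 𝕜 (tp u v) (tp u' v') : 𝕜) = inner 𝕜 u u' * inner 𝕜 v v')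
    (hdense : Dense (span 𝕜 (Set.range fun p : E × F => tp p.1 p.2) : Set G))
    {x : ι → E} {y : ι → F} {l : Filter ι} {x' : E} {y' : F} {Cx Cy : ℝ}
    (hCx : ∀ i, ‖x i‖ ≤ Cx) (hCy : ∀ i, ‖y i‖ ≤ Cy)
    (hx : WeakTendsto 𝕜 x l x') (hy : WeakTendsto 𝕜 y l y') :
    WeakTendsto 𝕜 (fun i => tp (x i) (y i)) l (tp x' y') := by
  refine weakTendsto_of_dense_span hdense (C := Cx * Cy) (fun i => ?_) ?_
  · rw [norm_apply_apply_of_inner htp]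
    exact mul_le_mul (hCx i) (hCy i) (norm_nonneg _) ((norm_nonneg _).trans (hCx i))
  · rintro _ ⟨⟨u, v⟩, rfl⟩
    simpa only [htp] using (hx u).mul (hy v)

theorem Submodule.eq_top_of_apply_apply_mem (htp : ∀ u v u' v',
      (inner 𝕜 (tp u v) (tp u' v') : 𝕜) = inner 𝕜 u u' * inner 𝕜 v v')
    (hdense : Dense (span 𝕜 (Set.range fun p : E × F => tp p.1 p.2) : Set G))
    {M : Submodule 𝕜 G} (hM : IsClosed (M : Set G)) {s : Set E} {t : Set F}
    (hs : Dense (span 𝕜 s : Set E)) (ht : Dense (span 𝕜 t : Set F))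
    (h : ∀ u ∈ s, ∀ v ∈ t, tp u v ∈ M) : M = ⊤ := by
  have hspan : ∀ u ∈ span 𝕜 s, ∀ v ∈ span 𝕜 t, tp u v ∈ M := by
    intro u hu v hv
    refine span_le.2 ?_ (map₂_span_span 𝕜 tp s t ▸ apply_mem_map₂ tp hu hv)
    rintro _ ⟨u, hu, v, hv, rfl⟩
    exact h u hu v hv
  have hall : ∀ u v, tp u v ∈ M := fun u v => hM.closure_subset <|
    map_mem_closure₂ (f := fun u v => tp u v) (continuous_uncurry_of_inner htp) (hs u) (ht v)
      hspan
  rw [eq_top_iff, ← hM.submodule_topologicalClosure_eq,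
    ← (dense_iff_topologicalClosure_eq_top.1 hdense)]
  refine topologicalClosure_mono (span_le.2 ?_)
  rintro _ ⟨⟨u, v⟩, rfl⟩
  exact hall u v

end InnerMultiplicative

namespace LinearIsometryEquiv

variable {𝕜 E F G : Type*} [NormedField 𝕜] [NormedAddCommGroup E] [NormedSpace 𝕜 E]
  [NormedAddCommGroup F] [NormedSpace 𝕜 F] [NormedAddCommGroup G] [NormedSpace 𝕜 G]

theorem zpow_add_apply (T : E ≃ₗᵢ[𝕜] E) (m n : ℤ) (x : E) :
    (T ^ (m + n)) x = (T ^ m) ((T ^ n) x) := by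
  rw [zpow_add, coe_mul, Function.comp_apply]

theorem zpow_apply_apply_of_forall {A : G ≃ₗᵢ[𝕜] G} {B : E ≃ₗᵢ[𝕜] E} {C : F ≃ₗᵢ[𝕜] F}
    {φ : E →ₗ[𝕜] F →ₗ[𝕜] G} (h : ∀ u v, A (φ u v) = φ (B u) (C v)) (n : ℤ) (u : E) (v : F) :
    (A ^ n) (φ u v) = φ ((B ^ n) u) ((C ^ n) v) := by
  have hnat : ∀ (n : ℕ) u v, (A ^ n) (φ u v) = φ ((B ^ n) u) ((C ^ n) v) := by
    intro n
    induction n with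
    | zero => simp
    | succ n ih => intro u v; simp only [pow_succ', coe_mul, Function.comp_apply, ih, h]
  cases n with
  | ofNat n => exact hnat n u v
  | negSucc n =>
    simp only [zpow_negSucc, coe_inv, symm_apply_eq, hnat, apply_symm_apply]

theorem zpow_apply_mem_closure_span_orbit (A : E ≃ₗᵢ[𝕜] E) (x : E) (m : ℤ) {y : E}
    (hy : y ∈ (span 𝕜 (Set.range fun n : ℤ => (A ^ n) x)).topologicalClosure) :
    (A ^ m) y ∈ (span 𝕜 (Set.range fun n : ℤ => (A ^ n) x)).topologicalClosure := by
  have hspan : span 𝕜 (Set.range fun n : ℤ => (A ^ n) x) ≤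
      (span 𝕜 (Set.range fun n : ℤ => (A ^ n) x)).comap ((A ^ m).toLinearEquiv : E →ₗ[𝕜] E) := by
    rw [span_le]
    rintro _ ⟨n, rfl⟩
    exact subset_span ⟨m + n, zpow_add_apply A m n x⟩
  exact map_mem_closure (A ^ m).continuous hy fun z hz => hspan hz

end LinearIsometryEquiv

section RootOfTensorSquare

variable {H K : Type*} [NormedAddCommGroup H] [InnerProductSpace ℂ H]
  [NormedAddCommGroup K] [InnerProductSpace ℂ K]
  {tp : H →ₗ[ℂ] H →ₗ[ℂ] K} {T : H ≃ₗᵢ[ℂ] H} {R : K ≃ₗᵢ[ℂ] K} {M : Submodule ℂ K}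

theorem zpow_two_mul_apply_of_apply_swap (hR : ∀ u v, R (tp u v) = tp v (T u)) (n : ℤ)
    (u v : H) : (R ^ (2 * n)) (tp u v) = tp ((T ^ n) u) ((T ^ n) v) := by
  rw [zpow_mul, zpow_ofNat]
  refine LinearIsometryEquiv.zpow_apply_apply_of_forall (fun u v => ?_) n u v
  rw [pow_two, LinearIsometryEquiv.coe_mul, Function.comp_apply, hR, hR]

theorem apply_apply_mem_of_weakTendsto [CompleteSpace K] (htp : ∀ u v u' v',
      (inner ℂ (tp u v) (tp u' v') : ℂ) = inner ℂ u u' * inner ℂ v v')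
    (hdense : Dense (span ℂ (Set.range fun p : H × H => tp p.1 p.2) : Set K))
    (hR : ∀ u v, R (tp u v) = tp v (T u)) (hM : IsClosed (M : Set K))
    (hRM : ∀ n : ℤ, ∀ y ∈ M, (R ^ n) y ∈ M) {k : ℕ → ℕ} {L : H → H}
    (hL : ∀ u, WeakTendsto ℂ (fun i => (T ^ k i) u) atTop (L u)) {u v : H} (huv : tp u v ∈ M) :
    tp (L u) (L v) ∈ M := by
  refine M.mem_of_weakTendsto hM (fun i => ?_) <|
    (hL u).apply_apply htp hdense (fun i => (LinearIsometryEquiv.norm_map _ u).le)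
      (fun i => (LinearIsometryEquiv.norm_map _ v).le) (hL v)
  simpa only [zpow_two_mul_apply_of_apply_swap hR, zpow_natCast] using hRM (2 * k i) _ huv

theorem zpow_apply_zpow_apply_mem (hR : ∀ u v, R (tp u v) = tp v (T u))
    (hRM : ∀ n : ℤ, ∀ y ∈ M, (R ^ n) y ∈ M) {a c : ℂ} (ha : a ≠ 0) (hc : c ≠ 0)
    (hL : ∀ u v, tp u v ∈ M → tp (a • u + c • T u) (a • v + c • T v) ∈ M) {f : H}
    (hf : tp f f ∈ M) (m n : ℤ) : tp ((T ^ m) f) ((T ^ n) f) ∈ M := by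
  have swap : ∀ u v, tp u v ∈ M → tp v (T u) ∈ M := fun u v h => by
    simpa only [zpow_one, hR] using hRM 1 _ h
  have shift : ∀ (j : ℤ) u v, tp u v ∈ M → tp ((T ^ j) u) ((T ^ j) v) ∈ M := fun j u v h => by
    simpa only [zpow_two_mul_apply_of_apply_swap hR] using hRM (2 * j) _ h
  have diag : ∀ d : ℕ, tp ((T ^ (d : ℤ)) f) f ∈ M ∧ tp ((T ^ (d : ℤ)) f) (T f) ∈ M := by
    intro d
    induction d with
    | zero => exact ⟨by simpa using hf, by simpa using swap f f hf⟩
    | succ d ih =>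
      set u := (T ^ (d : ℤ)) f
      have hTu : (T ^ ((d + 1 : ℕ) : ℤ)) f = T u := by
        rw [Nat.cast_succ, add_comm, LinearIsometryEquiv.zpow_add_apply, zpow_one]
      have hTuTf : tp (T u) (T f) ∈ M := by simpa using shift 1 _ _ ih.1
      have hexp : tp (a • u + c • T u) (a • f + c • T f) = (a * a) • tp u f + (a * c) • tp u (T f)
          + (c * a) • tp (T u) f + (c * c) • tp (T u) (T f) := by
        simp only [map_add, map_smul, LinearMap.add_apply, LinearMap.smul_apply]
        module
      have hlim := hL _ _ ih.1
      rw [hexp, M.add_mem_iff_left (M.smul_mem _ hTuTf),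
        M.add_mem_iff_right (M.add_mem (M.smul_mem _ ih.1) (M.smul_mem _ ih.2)),
        M.smul_mem_iff (mul_ne_zero hc ha)] at hlim
      exact hTu ▸ ⟨hlim, hTuTf⟩
  rcases le_or_gt n m with hnm | hmn
  · obtain ⟨d, rfl⟩ := Int.exists_add_of_le hnm
    simpa only [← LinearIsometryEquiv.zpow_add_apply] using shift n _ _ (diag d).1
  · obtain ⟨d, hd⟩ := Int.exists_add_of_le (Int.le_sub_one_of_lt hmn)
    have hTn : (T ^ n) f = T ((T ^ (n - 1)) f) := by
      rw [← Function.comp_apply (f := T), ← LinearIsometryEquiv.coe_mul, ← zpow_one_add,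
        add_sub_cancel]
    simpa only [← LinearIsometryEquiv.zpow_add_apply, ← hd, ← hTn] using
      swap _ _ (shift m _ _ (diag d).1)

end RootOfTensorSquare

theorem stmt11_general {H K : Type*}
    [NormedAddCommGroup H] [InnerProductSpace ℂ H]
    [NormedAddCommGroup K] [InnerProductSpace ℂ K] [CompleteSpace K]
    (tp : H →ₗ[ℂ] H →ₗ[ℂ] K)
    (htp_inner : ∀ u v u' v' : H,
      (inner ℂ (tp u v) (tp u' v') : ℂ) = (inner ℂ u u' : ℂ) * (inner ℂ v v' : ℂ))
    (htp_dense : Dense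
      ((Submodule.span ℂ (Set.range fun p : H × H => tp p.1 p.2) : Submodule ℂ K) : Set K))
    (T : H ≃ₗᵢ[ℂ] H)
    (k : ℕ → ℕ)
    (a : ℝ) (ha0 : 0 < a) (ha1 : a < 1)
    (hweak : ∀ f g : H,
      Tendsto (fun i => (inner ℂ ((T ^ k i) f) g : ℂ)) atTop
        (nhds (inner ℂ ((a : ℂ) • f + ((1 - a : ℝ) : ℂ) • T f) g)))
    (f : H)
    (hcyc : Dense ((Submodule.span ℂ (Set.range fun n : ℤ => (T ^ n) f) : Submodule ℂ H) : Set H))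
    (R : K ≃ₗᵢ[ℂ] K) (hR : ∀ u v : H, R (tp u v) = tp v (T u)) :
    Dense ((Submodule.span ℂ
      (Set.range fun n : ℤ => (R ^ n) (tp f f)) : Submodule ℂ K) : Set K) := by
  set M := (span ℂ (Set.range fun n : ℤ => (R ^ n) (tp f f))).topologicalClosure
  have hRM : ∀ n : ℤ, ∀ y ∈ M, (R ^ n) y ∈ M := fun n _ hy =>
    LinearIsometryEquiv.zpow_apply_mem_closure_span_orbit R (tp f f) n hy
  have hM : IsClosed (M : Set K) := isClosed_topologicalClosure _
  have hf : tp f f ∈ M := le_topologicalClosure _ (subset_span ⟨0, rfl⟩)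
  have ha : (a : ℂ) ≠ 0 := by exact_mod_cast ha0.ne'
  have hc : ((1 - a : ℝ) : ℂ) ≠ 0 := by exact_mod_cast (sub_pos.2 ha1).ne'
  have hL : ∀ u v, tp u v ∈ M →
      tp ((a : ℂ) • u + ((1 - a : ℝ) : ℂ) • T u) ((a : ℂ) • v + ((1 - a : ℝ) : ℂ) • T v) ∈ M :=
    fun _ _ => apply_apply_mem_of_weakTendsto htp_inner htp_dense hR hM hRM hweak
  rw [dense_iff_topologicalClosure_eq_top]
  refine M.eq_top_of_apply_apply_mem htp_inner htp_dense hM hcyc hcyc ?_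
  rintro _ ⟨m, rfl⟩ _ ⟨n, rfl⟩
  exact zpow_apply_zpow_apply_mem hR hRM ha hc hL hf m n

/-- Let `T` be a unitary operator on a Hilbert space `H` with `T^{k_i} → aI + (1−a)T`
weakly for some `k_i → ∞`, `a ∈ (0,1)`, and let `f` be a cyclic vector for `T`.  Let
`K` (with the bilinear map `tp`, elementary tensors with dense span and
`⟪u⊗v, u'⊗v'⟫ = ⟪u,u'⟫⟪v,v'⟫`) play the role of `H ⊗ H`, and let `R` be the unitary
on `H ⊗ H` with `R(u ⊗ v) = v ⊗ Tu` (so `R² = T ⊗ T`).  Then `f ⊗ f` is a cyclic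
vector for `R` on `H ⊗ H`; in particular `R` has simple spectrum and `T ⊗ T` has
spectrum of uniform multiplicity 2. -/
theorem stmt11 {H K : Type*}
    [NormedAddCommGroup H] [InnerProductSpace ℂ H] [CompleteSpace H]
    [NormedAddCommGroup K] [InnerProductSpace ℂ K] [CompleteSpace K]
    (tp : H →ₗ[ℂ] H →ₗ[ℂ] K)
    (htp_inner : ∀ u v u' v' : H,
      (inner ℂ (tp u v) (tp u' v') : ℂ) = (inner ℂ u u' : ℂ) * (inner ℂ v v' : ℂ))
    (htp_dense : Dense
      ((Submodule.span ℂ (Set.range fun p : H × H => tp p.1 p.2) : Submodule ℂ K) : Set K))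
    (T : H ≃ₗᵢ[ℂ] H)
    (k : ℕ → ℕ) (hk : Tendsto k atTop atTop)
    (a : ℝ) (ha0 : 0 < a) (ha1 : a < 1)
    (hweak : ∀ f g : H,
      Tendsto (fun i => (inner ℂ ((T ^ k i) f) g : ℂ)) atTop
        (nhds (inner ℂ ((a : ℂ) • f + ((1 - a : ℝ) : ℂ) • T f) g)))
    (f : H)
    (hcyc : Dense ((Submodule.span ℂ (Set.range fun n : ℤ => (T ^ n) f) : Submodule ℂ H) : Set H))
    (R : K ≃ₗᵢ[ℂ] K) (hR : ∀ u v : H, R (tp u v) = tp v (T u)) :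
    Dense ((Submodule.span ℂ
      (Set.range fun n : ℤ => (R ^ n) (tp f f)) : Submodule ℂ K) : Set K) :=
  stmt11_general tp htp_inner htp_dense T k a ha0 ha1 hweak f hcyc R hR
end

section
/- Let T be an invertible measure-preserving transformation of a probability space that is κ-mixing for some κ ∈ (0,1): T^{n(i)} → (1−κ)I + κΘ weakly for some n(i) → ∞. Let J : L²(μ) → L²(μ) ⊗ L²(μ) be a Markov (bistochastic) intertwining operator with (T ⊗ T)J = JT, and suppose J maps H (the mean-zero subspace) into H ⊗ H. Then J restricted to H is zero, i.e. J = JΘ. -/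
/-!
Write `P = (1 - κ) I + κ Θ` for the weak limit of `T^{n(i)}`. Since the weak limits of
`T^{n(i)} ⊗ T^{n(i)}` on elementary tensors are `P ⊗ P`, and the operators are uniformly bounded,
`(T ⊗ T)^{n(i)} → P ⊗ P` weakly on the whole tensor product. For `f ∈ H` the vector `J f` lies
in `H ⊗ H`, where `P ⊗ P` acts as `(1 - κ)²`. Computing the weak limit of
`(T ⊗ T)^{n(i)} J f = J T^{n(i)} f` in two ways gives `(1 - κ)² J f = (1 - κ) J f`, so `J f = 0`.
-/

open MeasureTheory Filter
open scoped InnerProductSpace Topology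

theorem LinearIsometryEquiv.coe_pow_eq_iterate {R E : Type*} [Semiring R]
    [SeminormedAddCommGroup E] [Module R E] (e : E ≃ₗᵢ[R] E) (m : ℕ) : ⇑(e ^ m) = e^[m] :=
  hom_coe_pow _ rfl (fun _ _ ↦ rfl) _ _

section WeakConvergence

variable {ι E K : Type*} {l : Filter ι}
  [NormedAddCommGroup E] [InnerProductSpace ℝ E] [NormedAddCommGroup K] [InnerProductSpace ℝ K]

theorem ContinuousLinearMap.tendsto_inner_apply [CompleteSpace E] (A : E →L[ℝ] K) {x : ι → E}
    {y : E} (h : ∀ g, Tendsto (fun i ↦ ⟪x i, g⟫_ℝ) l (𝓝 ⟪y, g⟫_ℝ)) (w : K) :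
    Tendsto (fun i ↦ ⟪A (x i), w⟫_ℝ) l (𝓝 ⟪A y, w⟫_ℝ) := by
  set g := (InnerProductSpace.toDual ℝ E).symm ((innerSL ℝ w).comp A)
  have hg : ∀ z, ⟪A z, w⟫_ℝ = ⟪z, g⟫_ℝ := fun z ↦ by
    rw [real_inner_comm g z, InnerProductSpace.toDual_symm_apply]
    exact real_inner_comm w (A z)
  simpa only [hg] using h g

theorem tendsto_inner_apply_of_dense_span (S : ι → K ≃ₗᵢ[ℝ] K) {s : Set K}
    (hs : Dense (Submodule.span ℝ s : Set K)) {w W : K}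
    (h : ∀ x ∈ s, Tendsto (fun i ↦ ⟪S i x, w⟫_ℝ) l (𝓝 ⟪x, W⟫_ℝ)) (x : K) :
    Tendsto (fun i ↦ ⟪S i x, w⟫_ℝ) l (𝓝 ⟪x, W⟫_ℝ) := by
  let G : Submodule ℝ K :=
    { carrier := {x | Tendsto (fun i ↦ ⟪S i x, w⟫_ℝ) l (𝓝 ⟪x, W⟫_ℝ)}
      zero_mem' := by simpa using tendsto_const_nhds
      add_mem' := fun {x y} hx hy ↦ by
        simpa only [Set.mem_ofPred_eq, map_add, inner_add_left] using hx.add hy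
      smul_mem' := fun c x hx ↦ by
        simpa only [Set.mem_ofPred_eq, map_smul, real_inner_smul_left] using hx.const_mul c }
  have hequi : Equicontinuous fun i x ↦ ⟪S i x, w⟫_ℝ := by
    refine (LipschitzWith.uniformEquicontinuous _ ‖w‖₊ fun i ↦ ?_).equicontinuous
    simpa only [real_inner_comm w, one_mul, innerSL_apply_apply, Function.comp_def] using
      ((innerSL ℝ w).lipschitz.comp (S i).lipschitz).weaken (NNReal.coe_le_coe.1 (by simp))
  have hG : IsClosed (G : Set K) :=
    hequi.isClosed_setOfPred_tendsto (continuous_id.inner continuous_const)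
  exact hG.closure_subset_iff.2 (Submodule.span_le.2 h) (hs x)

end WeakConvergence

section TensorSquare

variable {ι E K : Type*} {l : Filter ι} [NormedAddCommGroup E] [InnerProductSpace ℝ E]
  [NormedAddCommGroup K] [InnerProductSpace ℝ K] (tp : E →ₗ[ℝ] E →ₗ[ℝ] K)

theorem tendsto_inner_tensor_apply
    (htp_inner : ∀ u v u' v' : E, ⟪tp u v, tp u' v'⟫_ℝ = ⟪u, u'⟫_ℝ * ⟪v, v'⟫_ℝ)
    (htp_dense : Dense (Submodule.span ℝ (Set.range fun p : E × E ↦ tp p.1 p.2) : Set K))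
    (S : ι → E → E) (S2 : ι → K ≃ₗᵢ[ℝ] K) (hS2 : ∀ i u v, S2 i (tp u v) = tp (S i u) (S i v))
    (Q : E → E) (hS : ∀ u u', Tendsto (fun i ↦ ⟪S i u, u'⟫_ℝ) l (𝓝 ⟪u, Q u'⟫_ℝ))
    (x : K) (u' v' : E) :
    Tendsto (fun i ↦ ⟪S2 i x, tp u' v'⟫_ℝ) l (𝓝 ⟪x, tp (Q u') (Q v')⟫_ℝ) := by
  refine tendsto_inner_apply_of_dense_span S2 htp_dense (fun _ ⟨⟨u, v⟩, hx⟩ ↦ ?_) x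
  subst hx
  simp only [hS2, htp_inner]
  exact (hS u u').mul (hS v v')

theorem eq_zero_of_inner_tensor_eq_zero
    (htp_dense : Dense (Submodule.span ℝ (Set.range fun p : E × E ↦ tp p.1 p.2) : Set K))
    {x : K} (h : ∀ u v, ⟪x, tp u v⟫_ℝ = 0) : x = 0 := by
  have hspan : Submodule.span ℝ (Set.range fun p : E × E ↦ tp p.1 p.2) ≤
      LinearMap.ker (innerₛₗ ℝ x) :=
    Submodule.span_le.2 <| Set.range_subset_iff.2 fun p ↦ h p.1 p.2
  exact htp_dense.eq_zero_of_inner_left ℝ fun y hy ↦ hspan hy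

end TensorSquare

namespace MeasureTheory.L2

variable {X : Type*} [MeasurableSpace X] {μ : Measure X} [IsFiniteMeasure μ]

theorem inner_const_one_left (g : Lp ℝ 2 μ) : ⟪Lp.const 2 μ (1 : ℝ), g⟫_ℝ = ∫ x, g x ∂μ := by
  rw [← indicatorConstLp_univ, inner_indicatorConstLp_one, setIntegral_univ]

/-- `(1 - κ) I + κ Θ`, where `Θ f = (∫ f) • 1` is the projection onto the constants when `μ` is a
probability measure. -/
noncomputable def mixingLimit (κ : ℝ) (f : Lp ℝ 2 μ) : Lp ℝ 2 μ :=
  (1 - κ) • f + κ • ((∫ x, f x ∂μ) • Lp.const 2 μ (1 : ℝ))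

theorem inner_mixingLimit_left (κ : ℝ) (f g : Lp ℝ 2 μ) :
    ⟪mixingLimit κ f, g⟫_ℝ = (1 - κ) * ⟪f, g⟫_ℝ + κ * ((∫ x, f x ∂μ) * ∫ x, g x ∂μ) := by
  simp only [mixingLimit, inner_add_left, real_inner_smul_left, inner_const_one_left]

theorem inner_mixingLimit_comm (κ : ℝ) (f g : Lp ℝ 2 μ) :
    ⟪mixingLimit κ f, g⟫_ℝ = ⟪f, mixingLimit κ g⟫_ℝ := by
  rw [real_inner_comm (mixingLimit κ g) f, inner_mixingLimit_left, inner_mixingLimit_left,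
    real_inner_comm f g, mul_comm (∫ x, f x ∂μ)]

theorem inner_tensor_mixingLimit {K : Type*} [NormedAddCommGroup K] [InnerProductSpace ℝ K]
    (tp : Lp ℝ 2 μ →ₗ[ℝ] Lp ℝ 2 μ →ₗ[ℝ] K) {y : K}
    (hy : ∀ v, ⟪y, tp (Lp.const 2 μ (1 : ℝ)) v⟫_ℝ = 0 ∧ ⟪y, tp v (Lp.const 2 μ (1 : ℝ))⟫_ℝ = 0)
    (κ : ℝ) (u v : Lp ℝ 2 μ) :
    ⟪y, tp (mixingLimit κ u) (mixingLimit κ v)⟫_ℝ = (1 - κ) ^ 2 * ⟪y, tp u v⟫_ℝ := by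
  simp only [mixingLimit, map_add, map_smul, LinearMap.add_apply, LinearMap.smul_apply,
    inner_add_right, real_inner_smul_right, (hy _).1, (hy _).2]
  ring

end MeasureTheory.L2

theorem stmt13_general {X : Type*} [MeasurableSpace X] (μ : Measure X) [IsProbabilityMeasure μ]
    {K : Type*} [NormedAddCommGroup K] [InnerProductSpace ℝ K]
    (tp : Lp ℝ 2 μ →ₗ[ℝ] Lp ℝ 2 μ →ₗ[ℝ] K)
    (htp_inner : ∀ u v u' v' : Lp ℝ 2 μ,
      (inner ℝ (tp u v) (tp u' v') : ℝ) = (inner ℝ u u' : ℝ) * (inner ℝ v v' : ℝ))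
    (htp_dense : Dense
      ((Submodule.span ℝ (Set.range fun p : Lp ℝ 2 μ × Lp ℝ 2 μ => tp p.1 p.2) :
        Submodule ℝ K) : Set K))
    (T : Lp ℝ 2 μ ≃ₗᵢ[ℝ] Lp ℝ 2 μ)
    (κ : ℝ) (hκ0 : 0 < κ) (hκ1 : κ < 1)
    (n : ℕ → ℕ)
    (hκmix : ∀ f g : Lp ℝ 2 μ,
      Tendsto (fun i => (inner ℝ ((T ^ n i) f) g : ℝ)) atTop
        (nhds (inner ℝ ((1 - κ) • f + κ • ((∫ x, f x ∂μ) • (Lp.const 2 μ (1 : ℝ)))) g)))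
    (T2 : K ≃ₗᵢ[ℝ] K)
    (hT2 : ∀ u v : Lp ℝ 2 μ, T2 (tp u v) = tp (T u) (T v))
    (J : Lp ℝ 2 μ →L[ℝ] K)
    (hJT : ∀ f : Lp ℝ 2 μ, T2 (J f) = J (T f))
    (hJH : ∀ f : Lp ℝ 2 μ, ∫ x, f x ∂μ = 0 → ∀ v : Lp ℝ 2 μ,
      (inner ℝ (J f) (tp (Lp.const 2 μ (1 : ℝ)) v) : ℝ) = 0 ∧
      (inner ℝ (J f) (tp v (Lp.const 2 μ (1 : ℝ))) : ℝ) = 0) :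
    ∀ f : Lp ℝ 2 μ, ∫ x, f x ∂μ = 0 → J f = 0 := by
  intro f hf
  have hJT_pow : ∀ m g, (T2 ^ m) (J g) = J ((T ^ m) g) := fun m g ↦ by
    simp only [LinearIsometryEquiv.coe_pow_eq_iterate]
    exact ((Function.Semiconj.iterate_right (f := J) (fun g ↦ (hJT g).symm) m) g).symm
  have hT2_pow : ∀ m u v, (T2 ^ m) (tp u v) = tp ((T ^ m) u) ((T ^ m) v) := fun m u v ↦ by
    have h := Function.Semiconj.iterate_right (f := fun p : Lp ℝ 2 μ × Lp ℝ 2 μ ↦ tp p.1 p.2)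
      (ga := Prod.map T T) (fun p ↦ (hT2 p.1 p.2).symm) m (u, v)
    simp only [LinearIsometryEquiv.coe_pow_eq_iterate, Prod.map_iterate] at h ⊢
    exact h.symm
  have hmix : ∀ u u' : Lp ℝ 2 μ, Tendsto (fun i ↦ ⟪(T ^ n i) u, u'⟫_ℝ) atTop
      (𝓝 ⟪u, L2.mixingLimit κ u'⟫_ℝ) := fun u u' ↦ by
    rw [← L2.inner_mixingLimit_comm]; exact hκmix u u'
  refine eq_zero_of_inner_tensor_eq_zero tp htp_dense fun u' v' ↦ ?_
  have h_tensor := tendsto_inner_tensor_apply tp htp_inner htp_dense (fun i ↦ ⇑(T ^ n i))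
    (fun i ↦ T2 ^ n i) (fun i ↦ hT2_pow (n i)) _ hmix (J f) u' v'
  have h_J : Tendsto (fun i ↦ ⟪(T2 ^ n i) (J f), tp u' v'⟫_ℝ) atTop
      (𝓝 ((1 - κ) * ⟪J f, tp u' v'⟫_ℝ)) := by
    simp only [hJT_pow]
    convert J.tendsto_inner_apply (hκmix f) (tp u' v') using 2
    simp [hf, real_inner_smul_left]
  have h_eq : (1 - κ) ^ 2 * ⟪J f, tp u' v'⟫_ℝ = (1 - κ) * ⟪J f, tp u' v'⟫_ℝ := by
    rw [← L2.inner_tensor_mixingLimit tp (hJH f hf)]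
    exact tendsto_nhds_unique h_tensor h_J
  have h_prod : ((1 - κ) * κ) * ⟪J f, tp u' v'⟫_ℝ = 0 := by linear_combination -h_eq
  exact (mul_eq_zero.1 h_prod).resolve_left (mul_ne_zero (by linarith) hκ0.ne')

/-- Let `T` be (the Koopman unitary of) a κ-mixing measure-preserving transformation,
`κ ∈ (0,1)`: `T^{n(i)} → (1−κ)I + κΘ` weakly for some `n(i) → ∞`, where `Θ` is the
projection onto constants.  Let the Hilbert space `K` together with the bilinear map
`tp` (elementary tensors with dense span, `⟪u⊗v, u'⊗v'⟫ = ⟪u,u'⟫⟪v,v'⟫`) play the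
role of `L²(μ) ⊗ L²(μ)`, and `T2 = T ⊗ T`.  If `J : L²(μ) → L²(μ) ⊗ L²(μ)` is a
Markov (bistochastic) intertwining operator, i.e. `(T ⊗ T)J = JT`, `J 1 = 1 ⊗ 1`,
`J*(1 ⊗ 1) = 1`, and `J` maps the mean-zero subspace `H` into `H ⊗ H`, then `J`
restricted to `H` is zero, i.e. `J = JΘ`. -/
theorem stmt13 {X : Type*} [MeasurableSpace X] (μ : Measure X) [IsProbabilityMeasure μ]
    {K : Type*} [NormedAddCommGroup K] [InnerProductSpace ℝ K] [CompleteSpace K]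
    (tp : Lp ℝ 2 μ →ₗ[ℝ] Lp ℝ 2 μ →ₗ[ℝ] K)
    (htp_inner : ∀ u v u' v' : Lp ℝ 2 μ,
      (inner ℝ (tp u v) (tp u' v') : ℝ) = (inner ℝ u u' : ℝ) * (inner ℝ v v' : ℝ))
    (htp_dense : Dense
      ((Submodule.span ℝ (Set.range fun p : Lp ℝ 2 μ × Lp ℝ 2 μ => tp p.1 p.2) :
        Submodule ℝ K) : Set K))
    (T : Lp ℝ 2 μ ≃ₗᵢ[ℝ] Lp ℝ 2 μ)
    (κ : ℝ) (hκ0 : 0 < κ) (hκ1 : κ < 1)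
    (n : ℕ → ℕ) (hn : Tendsto n atTop atTop)
    (hκmix : ∀ f g : Lp ℝ 2 μ,
      Tendsto (fun i => (inner ℝ ((T ^ n i) f) g : ℝ)) atTop
        (nhds (inner ℝ ((1 - κ) • f + κ • ((∫ x, f x ∂μ) • (Lp.const 2 μ (1 : ℝ)))) g)))
    (T2 : K ≃ₗᵢ[ℝ] K)
    (hT2 : ∀ u v : Lp ℝ 2 μ, T2 (tp u v) = tp (T u) (T v))
    (J : Lp ℝ 2 μ →L[ℝ] K)
    (hJ1 : J (Lp.const 2 μ (1 : ℝ)) = tp (Lp.const 2 μ (1 : ℝ)) (Lp.const 2 μ (1 : ℝ)))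
    (hJadj1 : ∀ f : Lp ℝ 2 μ,
      (inner ℝ (J f) (tp (Lp.const 2 μ (1 : ℝ)) (Lp.const 2 μ (1 : ℝ))) : ℝ)
        = inner ℝ f (Lp.const 2 μ (1 : ℝ)))
    (hJT : ∀ f : Lp ℝ 2 μ, T2 (J f) = J (T f))
    (hJH : ∀ f : Lp ℝ 2 μ, ∫ x, f x ∂μ = 0 → ∀ v : Lp ℝ 2 μ,
      (inner ℝ (J f) (tp (Lp.const 2 μ (1 : ℝ)) v) : ℝ) = 0 ∧
      (inner ℝ (J f) (tp v (Lp.const 2 μ (1 : ℝ))) : ℝ) = 0) :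
    ∀ f : Lp ℝ 2 μ, ∫ x, f x ∂μ = 0 → J f = 0 :=
  stmt13_general μ tp htp_inner htp_dense T κ hκ0 hκ1 n hκmix T2 hT2 J hJT hJH
end

section
/- Let ν be a self-joining of three copies of a measure-preserving automorphism T of (X, μ) (i.e. ν is a (T×T×T)-invariant probability measure on X³ with all three one-dimensional marginals equal to μ), and suppose the projection of ν onto each two-dimensional face equals μ ⊗ μ. If additionally ν is invariant under Id × Id × T^v for some v such that T^v is mixing (equivalently T^{nv} → Θ weakly), then ν = μ ⊗ μ ⊗ μ. -/
/-!
Fix measurable `s, t` and let `ρ(u) = ν(s × t × u)`. Then `ρ ≤ μ` (the third marginal of `ν` is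
`μ`) and `ρ` is `S`-invariant for `S = T^v`. Writing `c = μ(u)` and `E_i = S^{-iK} u`, the sets
`E_i` all have `μ`-measure `c` and `ρ`-measure `ρ(u)`, so
`N (ρ(u) - ρ(X) c) = ∫ (∑_{i<N} 1_{E_i} - N c) dρ`, whose square is at most the `μ`-variance of
`∑_{i<N} 1_{E_i}` because `ρ ≤ μ`. By mixing, for `K` large the `E_i` are pairwise
`ε`-uncorrelated, so that variance is at most `N + N²ε`. Hence `ρ(u) = ρ(X) μ(u)`, and pairwise
independence gives `ρ(X) = μ(s) μ(t)`.
-/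

open MeasureTheory ProbabilityTheory Filter Set Topology

section

variable {X : Type*} [MeasurableSpace X]

def IsMixing (S : X → X) (μ : Measure X) : Prop :=
  ∀ A B : Set X, MeasurableSet A → MeasurableSet B →
    Tendsto (fun n => μ.real (A ∩ S^[n] ⁻¹' B)) atTop (𝓝 (μ.real A * μ.real B))

theorem sq_integral_sub_le_variance_of_le {μ ρ : Measure X} [IsProbabilityMeasure μ]
    (hρμ : ρ ≤ μ) {g : X → ℝ} (hg : MemLp g 2 μ) :
    (∫ x, (g x - μ[g]) ∂ρ) ^ 2 ≤ Var[g; μ] := by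
  set h : X → ℝ := fun x => g x - μ[g]
  have hh : MemLp h 2 μ := hg.sub (memLp_const _)
  have habs : |∫ x, h x ∂ρ| ≤ ∫ x, |h x| ∂μ :=
    abs_integral_le_integral_abs.trans <| integral_mono_measure hρμ
      (ae_of_all _ fun _ => abs_nonneg _) (hh.integrable one_le_two).abs
  have hjensen : (∫ x, |h x| ∂μ) ^ 2 ≤ ∫ x, |h x| ^ 2 ∂μ := by
    have hvar := variance_nonneg |h| μ
    rw [variance_eq_sub hh.abs, sub_nonneg] at hvar
    simpa only [Pi.pow_apply, Pi.abs_apply] using hvar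
  calc (∫ x, h x ∂ρ) ^ 2 = |∫ x, h x ∂ρ| ^ 2 := (sq_abs _).symm
    _ ≤ (∫ x, |h x| ∂μ) ^ 2 := pow_le_pow_left₀ (abs_nonneg _) habs 2
    _ ≤ ∫ x, |h x| ^ 2 ∂μ := hjensen
    _ = Var[g; μ] := by
      simp_rw [sq_abs]
      exact (variance_eq_integral hg.aemeasurable).symm

theorem memLp_indicator_one {μ : Measure X} [IsFiniteMeasure μ] {s : Set X}
    (hs : MeasurableSet s) : MemLp (s.indicator (1 : X → ℝ)) 2 μ :=
  memLp_indicator_const 2 hs (1 : ℝ) (.inr (measure_ne_top _ _))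

theorem covariance_indicator_one {μ : Measure X} [IsProbabilityMeasure μ] {s t : Set X}
    (hs : MeasurableSet s) (ht : MeasurableSet t) :
    cov[s.indicator 1, t.indicator 1; μ] = μ.real (s ∩ t) - μ.real s * μ.real t := by
  rw [covariance_eq_sub (memLp_indicator_one hs) (memLp_indicator_one ht), ← inter_indicator_one]
  simp only [integral_indicator_one hs, integral_indicator_one ht,
    integral_indicator_one (hs.inter ht)]

theorem integral_sum_indicator_one {μ : Measure X} [IsFiniteMeasure μ] {E : ℕ → Set X}
    (hE : ∀ i, MeasurableSet (E i)) (s : Finset ℕ) :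
    ∫ x, (∑ i ∈ s, (E i).indicator (1 : X → ℝ)) x ∂μ = ∑ i ∈ s, μ.real (E i) := by
  simp only [Finset.sum_apply]
  rw [integral_finsetSum _ fun i _ => (memLp_indicator_one (hE i)).integrable one_le_two]
  exact Finset.sum_congr rfl fun i _ => integral_indicator_one (hE i)

theorem variance_sum_indicator_one_le {μ : Measure X} [IsProbabilityMeasure μ] {E : ℕ → Set X}
    (hE : ∀ i, MeasurableSet (E i)) {ε : ℝ} (hε : 0 ≤ ε)
    (hcov : ∀ i j, i ≠ j → μ.real (E i ∩ E j) ≤ μ.real (E i) * μ.real (E j) + ε) (N : ℕ) :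
    Var[∑ i ∈ Finset.range N, (E i).indicator 1; μ] ≤ N + N ^ 2 * ε := by
  have hcov' : ∀ i j, cov[(E i).indicator 1, (E j).indicator 1; μ]
      ≤ (if i = j then 1 else 0) + ε := by
    intro i j
    rw [covariance_indicator_one (hE i) (hE j)]
    split_ifs with hij
    · subst hij
      rw [inter_self]
      nlinarith [measureReal_le_one (μ := μ) (s := E i), measureReal_nonneg (μ := μ) (s := E i)]
    · linarith [hcov i j hij]
  calc Var[∑ i ∈ Finset.range N, (E i).indicator 1; μ]
      = ∑ i ∈ Finset.range N, ∑ j ∈ Finset.range N,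
          cov[(E i).indicator 1, (E j).indicator 1; μ] :=
        variance_sum' fun i _ => memLp_indicator_one (hE i)
    _ ≤ ∑ i ∈ Finset.range N, ∑ j ∈ Finset.range N, ((if i = j then 1 else 0) + ε) :=
        Finset.sum_le_sum fun i _ => Finset.sum_le_sum fun j _ => hcov' i j
    _ = N + N ^ 2 * ε := by
        rw [Finset.sum_congr rfl fun i hi => by
          rw [Finset.sum_add_distrib, Finset.sum_ite_eq, if_pos hi]]
        simp only [Finset.sum_add_distrib, Finset.sum_const, Finset.card_range, nsmul_eq_mul]
        ring

theorem MeasureTheory.MeasurePreserving.measure_preimage_iterate_inter {S : X → X}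
    {μ : Measure X} (hS : MeasurePreserving S μ μ) {C : Set X} (hC : MeasurableSet C)
    {m n : ℕ} (hmn : m ≤ n) :
    μ (S^[m] ⁻¹' C ∩ S^[n] ⁻¹' C) = μ (C ∩ S^[n - m] ⁻¹' C) := by
  have hsplit : S^[n] = S^[n - m] ∘ S^[m] := by
    rw [← Function.iterate_add, Nat.sub_add_cancel hmn]
  rw [hsplit, preimage_comp, ← preimage_inter]
  exact (hS.iterate m).measure_preimage
    (hC.inter (hC.preimage (hS.measurable.iterate _))).nullMeasurableSet

theorem sq_measureReal_sub_measureReal_univ_mul_le {μ ρ : Measure X} [IsProbabilityMeasure μ]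
    {S : X → X} (hS : MeasurePreserving S μ μ) (hρμ : ρ ≤ μ) (hρ : MeasurePreserving S ρ ρ)
    {C : Set X} (hC : MeasurableSet C) {K : ℕ} {ε : ℝ} (hε : 0 ≤ ε)
    (hK : ∀ k ≥ K, μ.real (C ∩ S^[k] ⁻¹' C) ≤ μ.real C * μ.real C + ε) {N : ℕ} (hN : 0 < N) :
    (ρ.real C - ρ.real univ * μ.real C) ^ 2 ≤ 1 / N + ε := by
  have : IsFiniteMeasure ρ := isFiniteMeasure_of_le μ hρμ
  set E : ℕ → Set X := fun i => S^[i * K] ⁻¹' C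
  have hE : ∀ i, MeasurableSet (E i) := fun i => hC.preimage (hS.measurable.iterate _)
  have hμE : ∀ i, μ.real (E i) = μ.real C := fun i =>
    (hS.iterate _).measureReal_preimage hC.nullMeasurableSet
  have hρE : ∀ i, ρ.real (E i) = ρ.real C := fun i =>
    (hρ.iterate _).measureReal_preimage hC.nullMeasurableSet
  have hcov : ∀ i j, i ≠ j → μ.real (E i ∩ E j) ≤ μ.real (E i) * μ.real (E j) + ε := by
    intro i j hij
    wlog hlt : i < j generalizing i j
    · rw [inter_comm, mul_comm]
      exact this j i hij.symm (by omega)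
    have hgap : K ≤ j * K - i * K := by
      have := Nat.mul_le_mul_right K (Nat.succ_le_of_lt hlt)
      rw [Nat.succ_mul] at this
      omega
    rw [hμE, hμE, measureReal_def,
      hS.measure_preimage_iterate_inter hC (Nat.mul_le_mul_right K hlt.le), ← measureReal_def]
    exact hK _ hgap
  set g := ∑ i ∈ Finset.range N, (E i).indicator (1 : X → ℝ)
  have hg : MemLp g 2 μ := memLp_finsetSum' _ fun i _ => memLp_indicator_one (hE i)
  have hgρ : ∫ x, (g x - μ[g]) ∂ρ = N * (ρ.real C - ρ.real univ * μ.real C) := by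
    rw [integral_sub ((hg.integrable one_le_two).mono_measure hρμ) (integrable_const _),
      integral_const, integral_sum_indicator_one hE, integral_sum_indicator_one hE]
    simp only [hρE, hμE, Finset.sum_const, Finset.card_range, nsmul_eq_mul, smul_eq_mul]
    ring
  have hvar := sq_integral_sub_le_variance_of_le hρμ hg
  rw [hgρ] at hvar
  have hbound := hvar.trans (variance_sum_indicator_one_le hE hε hcov N)
  have hNpos : (0 : ℝ) < N := Nat.cast_pos.2 hN
  rw [div_add' _ _ _ hNpos.ne', le_div_iff₀ hNpos]
  nlinarith

theorem IsMixing.eq_smul_of_le {μ ρ : Measure X} [IsProbabilityMeasure μ] {S : X → X}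
    (hmix : IsMixing S μ) (hS : MeasurePreserving S μ μ) (hρμ : ρ ≤ μ)
    (hρ : MeasurePreserving S ρ ρ) : ρ = ρ univ • μ := by
  have : IsFiniteMeasure ρ := isFiniteMeasure_of_le μ hρμ
  ext C hC
  set D := ρ.real C - ρ.real univ * μ.real C
  have hD : ∀ ε > 0, D ^ 2 ≤ 0 + ε := by
    intro ε hε
    obtain ⟨K, hK⟩ := eventually_atTop.1 <|
      (hmix C C hC hC).eventually (eventually_le_nhds (lt_add_of_pos_right _ hε))
    exact ge_of_tendsto (tendsto_one_div_atTop_nhds_zero_nat.add_const ε) <|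
      eventually_atTop.2 ⟨1, fun _ hN =>
        sq_measureReal_sub_measureReal_univ_mul_le hS hρμ hρ hC hε.le hK hN⟩
  have hD0 : D = 0 := pow_eq_zero_iff two_ne_zero |>.1 <|
    le_antisymm (le_of_forall_pos_le_add hD) (sq_nonneg D)
  rw [Measure.smul_apply, smul_eq_mul, ← ENNReal.toReal_eq_toReal_iff' (measure_ne_top ρ C)
    (ENNReal.mul_ne_top (measure_ne_top ρ univ) (measure_ne_top μ C)), ENNReal.toReal_mul]
  exact sub_eq_zero.1 hD0

section ThirdCoordinate

variable {Y Z : Type*} [MeasurableSpace Y] [MeasurableSpace Z] {ν : Measure (X × Y × Z)}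
  {s : Set X} {t : Set Y}

theorem map_restrict_prod_prod_univ_apply {u : Set Z} (hu : MeasurableSet u) :
    (ν.restrict (s ×ˢ t ×ˢ univ)).map (fun p => p.2.2) u = ν (s ×ˢ t ×ˢ u) := by
  rw [Measure.map_apply (by fun_prop) hu, Measure.restrict_apply (measurable_snd.snd hu)]
  congr 1
  ext p
  simp only [mem_preimage, mem_inter_iff, mem_prod, mem_univ, and_true]
  tauto

theorem measurePreserving_map_restrict_prod_prod_univ {S : Z → Z} (hS : Measurable S)
    (hν : MeasurePreserving (fun p : X × Y × Z => (p.1, p.2.1, S p.2.2)) ν ν)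
    (hs : MeasurableSet s) (ht : MeasurableSet t) :
    MeasurePreserving S ((ν.restrict (s ×ˢ t ×ˢ univ)).map (fun p => p.2.2))
      ((ν.restrict (s ×ˢ t ×ˢ univ)).map (fun p => p.2.2)) := by
  refine ⟨hS, Measure.ext fun u hu => ?_⟩
  rw [Measure.map_apply hS hu, map_restrict_prod_prod_univ_apply hu,
    map_restrict_prod_prod_univ_apply (hS hu), ← hν.measure_preimage
    (hs.prod (ht.prod hu)).nullMeasurableSet]
  rfl

end ThirdCoordinate

end

theorem stmt14_general {X : Type*} [MeasurableSpace X] (μ : Measure X) [IsProbabilityMeasure μ]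
    (T : X → X) (hT : MeasurePreserving T μ μ)
    (ν : Measure (X × X × X)) [IsProbabilityMeasure ν]
    (h12 : ν.map (fun p : X × X × X => (p.1, p.2.1)) = μ.prod μ)
    (h23 : ν.map (fun p : X × X × X => (p.2.1, p.2.2)) = μ.prod μ)
    (v : ℕ)
    (hinv2 : MeasurePreserving (fun p : X × X × X => (p.1, p.2.1, T^[v] p.2.2)) ν ν)
    (hmixv : ∀ A B : Set X, MeasurableSet A → MeasurableSet B →
      Tendsto (fun m : ℕ => (μ (A ∩ T^[m * v] ⁻¹' B)).toReal) atTop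
        (nhds ((μ A).toReal * (μ B).toReal))) :
    ν = μ.prod (μ.prod μ) := by
  have hmix : IsMixing T^[v] μ := fun A B hA hB => by
    simpa only [← Function.iterate_mul, mul_comm v, measureReal_def] using hmixv A B hA hB
  have hν₃ : ν.map (fun p => p.2.2) = μ := by
    rw [← Function.comp_def Prod.snd (fun p : X × X × X => (p.2.1, p.2.2)),
      ← Measure.map_map measurable_snd (by fun_prop), h23, Measure.map_snd_prod, measure_univ,
      one_smul]
  refine Measure.ext_prod₃ fun {s t u} hs ht hu => ?_
  set ρ := (ν.restrict (s ×ˢ t ×ˢ univ)).map (fun p => p.2.2)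
  have hρμ : ρ ≤ μ := hν₃ ▸ Measure.map_mono Measure.restrict_le_self (by fun_prop)
  have hρ : MeasurePreserving T^[v] ρ ρ :=
    measurePreserving_map_restrict_prod_prod_univ (hT.measurable.iterate v) hinv2 hs ht
  have hρ_apply : ∀ w, MeasurableSet w → ρ w = ν (s ×ˢ t ×ˢ w) :=
    fun w hw => map_restrict_prod_prod_univ_apply hw
  have hρuniv : ρ univ = μ s * μ t := by
    rw [hρ_apply univ .univ, ← Measure.prod_prod, ← h12,
      Measure.map_apply (by fun_prop) (hs.prod ht)]
    congr 1
    ext p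
    simp
  rw [← hρ_apply u hu, hmix.eq_smul_of_le (hT.iterate v) hρμ hρ,
    Measure.smul_apply, smul_eq_mul, hρuniv, Measure.prod_prod, Measure.prod_prod, mul_assoc]

/-- Let `ν` be a self-joining of three copies of a measure-preserving automorphism
`T` of `(X, μ)` whose projections onto all three two-dimensional faces equal
`μ ⊗ μ` (pairwise independence).  If moreover `ν` is invariant under
`Id × Id × T^v` for some `v` such that `T^v` is mixing, then
`ν = μ ⊗ μ ⊗ μ`. -/
theorem stmt14 {X : Type*} [MeasurableSpace X] (μ : Measure X) [IsProbabilityMeasure μ]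
    (T : X → X) (hT : MeasurePreserving T μ μ)
    (ν : Measure (X × X × X)) [IsProbabilityMeasure ν]
    (hinv : MeasurePreserving (fun p : X × X × X => (T p.1, T p.2.1, T p.2.2)) ν ν)
    (h12 : ν.map (fun p : X × X × X => (p.1, p.2.1)) = μ.prod μ)
    (h13 : ν.map (fun p : X × X × X => (p.1, p.2.2)) = μ.prod μ)
    (h23 : ν.map (fun p : X × X × X => (p.2.1, p.2.2)) = μ.prod μ)
    (v : ℕ)
    (hinv2 : MeasurePreserving (fun p : X × X × X => (p.1, p.2.1, T^[v] p.2.2)) ν ν)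
    (hmixv : ∀ A B : Set X, MeasurableSet A → MeasurableSet B →
      Tendsto (fun m : ℕ => (μ (A ∩ T^[m * v] ⁻¹' B)).toReal) atTop
        (nhds ((μ A).toReal * (μ B).toReal))) :
    ν = μ.prod (μ.prod μ) :=
  stmt14_general μ T hT ν h12 h23 v hinv2 hmixv
end
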